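/- arXiv:2001.10373 — 8 statements merged into one kernel-verified Lean document; each statement's English description precedes it below -/
import Mathlib

section
/- Let d ≥ 1, 𝔯 > 0, and let X ⊆ ℝ^d be a set of points such that |x − y| > 2𝔯 for all distinct x, y ∈ X. For x ∈ X define the open Voronoi cell G(x) := { y ∈ ℝ^d : |x − y| < |x' − y| for every x' ∈ X \ {x} }, and assume that G(x) is bounded, with diameter d(x) := diam G(x). Then the set I(x) := { y ∈ X : G(y) ∩ { z ∈ ℝ^d : dist(z, G(x)) < 𝔯 } ≠ ∅ } is finite and its cardinality satisfies #I(x) ≤ (4 d(x)/𝔯)^d. -/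
open Metric Set MeasureTheory ENNReal

section aux

variable {d : ℕ}

/-- Key counting lemma: a finite set of points with mutual distance `> 2𝔯` contained in
`closedBall x R` has at most `((R+𝔯)/𝔯)^d` elements, by a volume packing argument. -/
lemma voronoi_pack (d : ℕ) (hd : 1 ≤ d) (𝔯 : ℝ) (h𝔯 : 0 < 𝔯) (R : ℝ) (hR : 0 ≤ R)
    (F : Finset (EuclideanSpace ℝ (Fin d)))
    (hFd : ∀ y ∈ F, ∀ z ∈ F, y ≠ z → 2 * 𝔯 < dist y z)
    (x : EuclideanSpace ℝ (Fin d))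
    (hFR : ∀ y ∈ F, dist y x ≤ R) :
    (F.card : ℝ) * 𝔯 ^ d ≤ (R + 𝔯) ^ d := by
  set μ := (volume : Measure (EuclideanSpace ℝ (Fin d)))
  set c := μ (ball (0 : EuclideanSpace ℝ (Fin d)) 1) with hc
  have hc0 : c ≠ 0 := (measure_ball_pos μ _ one_pos).ne'
  have hctop : c ≠ ⊤ := measure_ball_lt_top.ne
  have hdisj : (↑F : Set (EuclideanSpace ℝ (Fin d))).PairwiseDisjoint
      fun y => closedBall y 𝔯 := by
    intro a ha b hb hab
    exact closedBall_disjoint_closedBall (by linarith [hFd a ha b hb hab])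
  have hunion : (⋃ y ∈ F, closedBall y 𝔯) ⊆ closedBall x (R + 𝔯) := by
    simp only [Set.iUnion_subset_iff]
    intro y hy
    exact closedBall_subset_closedBall' (by linarith [hFR y hy])
  have hball : ∀ y : EuclideanSpace ℝ (Fin d),
      μ (closedBall y 𝔯) = ENNReal.ofReal (𝔯 ^ d) * c := by
    intro y
    rw [Measure.addHaar_closedBall _ _ h𝔯.le, finrank_euclideanSpace_fin]
  have hsum : (F.card : ℝ≥0∞) * (ENNReal.ofReal (𝔯 ^ d) * c)
      ≤ ENNReal.ofReal ((R + 𝔯) ^ d) * c := by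
    calc (F.card : ℝ≥0∞) * (ENNReal.ofReal (𝔯 ^ d) * c)
        = ∑ y ∈ F, μ (closedBall y 𝔯) := by
          rw [Finset.sum_congr rfl fun y _ => hball y, Finset.sum_const, nsmul_eq_mul]
      _ = μ (⋃ y ∈ F, closedBall y 𝔯) :=
          (measure_biUnion_finset hdisj fun y _ => measurableSet_closedBall).symm
      _ ≤ μ (closedBall x (R + 𝔯)) := measure_mono hunion
      _ = ENNReal.ofReal ((R + 𝔯) ^ d) * c := by
          rw [Measure.addHaar_closedBall _ _ (by linarith), finrank_euclideanSpace_fin]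
  rw [← mul_assoc] at hsum
  have hsum2 : (F.card : ℝ≥0∞) * ENNReal.ofReal (𝔯 ^ d)
      ≤ ENNReal.ofReal ((R + 𝔯) ^ d) :=
    (ENNReal.mul_le_mul_iff_left hc0 hctop).mp hsum
  have : ENNReal.ofReal ((F.card : ℝ) * 𝔯 ^ d) ≤ ENNReal.ofReal ((R + 𝔯) ^ d) := by
    rwa [ENNReal.ofReal_mul (by positivity), ENNReal.ofReal_natCast]
  exact (ENNReal.ofReal_le_ofReal_iff (by positivity)).mp this

end aux

/-- **Bound on the number of Voronoi neighbors** (Lemma 2.11 of the paper).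
Let `X ⊆ ℝ^d` be a set of points with mutual distance `> 2𝔯`, let `G x` be the open Voronoi cell
of `x ∈ X` (assumed bounded, for every point of `X`). Then the set of `y ∈ X` whose Voronoi cell
meets the open `𝔯`-neighborhood of `G x` is finite, with cardinality at most
`(4 · diam (G x) / 𝔯)^d`. -/
theorem stmt1 (d : ℕ) (hd : 1 ≤ d) (𝔯 : ℝ) (h𝔯 : 0 < 𝔯)
    (X : Set (EuclideanSpace ℝ (Fin d)))
    (hX : ∀ x ∈ X, ∀ y ∈ X, x ≠ y → 2 * 𝔯 < dist x y)
    (G : EuclideanSpace ℝ (Fin d) → Set (EuclideanSpace ℝ (Fin d)))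
    (hG : ∀ x ∈ X, G x = {y | ∀ x' ∈ X \ {x}, dist x y < dist x' y})
    (hbdd : ∀ x ∈ X, Bornology.IsBounded (G x))
    (x : EuclideanSpace ℝ (Fin d)) (hx : x ∈ X) :
    {y ∈ X | (G y ∩ Metric.thickening 𝔯 (G x)).Nonempty}.Finite ∧
      (({y ∈ X | (G y ∩ Metric.thickening 𝔯 (G x)).Nonempty}.ncard : ℝ) ≤
        (4 * Metric.diam (G x) / 𝔯) ^ d) := by
  set D := Metric.diam (G x) with hD
  set S := {y ∈ X | (G y ∩ Metric.thickening 𝔯 (G x)).Nonempty} with hS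
  have hD0 : 0 ≤ D := Metric.diam_nonneg
  -- the open ball of radius 𝔯 around each point of X is inside its Voronoi cell
  have hball : ∀ y ∈ X, ball y 𝔯 ⊆ G y := by
    intro y hy z hz
    rw [hG y hy]
    intro x' hx'
    have h1 : 2 * 𝔯 < dist x' y := hX x' hx'.1 y hy hx'.2
    have h2 : dist y z < 𝔯 := mem_ball'.mp hz
    have := dist_triangle x' y z
    rw [dist_comm y z] at h2
    calc dist y z = dist z y := dist_comm y z
      _ < 𝔯 := hz
      _ < dist x' z := by linarith [dist_triangle x' z y, dist_comm z y ▸ (mem_ball.mp hz)]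
  -- 2𝔯 ≤ D
  have h2rD : 2 * 𝔯 ≤ D := by
    by_contra h
    push_neg at h
    set u : EuclideanSpace ℝ (Fin d) := EuclideanSpace.single (⟨0, hd⟩ : Fin d) (1 : ℝ) with hu
    have hnu : ‖u‖ = 1 := by rw [hu, EuclideanSpace.norm_single]; norm_num
    set t : ℝ := (D / 2 + 𝔯) / 2 with ht
    have ht0 : 0 ≤ t := by positivity
    have htr : t < 𝔯 := by linarith
    have hDt : D < 2 * t := by linarith
    have ha : x + t • u ∈ G x := hball x hx (by
      rw [mem_ball]
      have : dist (x + t • u) x = t := by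
        rw [dist_eq_norm]
        simp [norm_smul, hnu, abs_of_nonneg ht0]
      rw [this]; exact htr)
    have hb : x - t • u ∈ G x := hball x hx (by
      rw [mem_ball]
      have : dist (x - t • u) x = t := by
        rw [dist_eq_norm]
        simp [norm_smul, hnu, abs_of_nonneg ht0]
      rw [this]; exact htr)
    have hdist : dist (x + t • u) (x - t • u) = 2 * t := by
      rw [dist_eq_norm]
      have : (x + t • u) - (x - t • u) = (2 * t) • u := by
        module
      rw [this, norm_smul, hnu, Real.norm_eq_abs, abs_of_nonneg (by linarith : (0:ℝ) ≤ 2 * t)]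
      ring
    have := Metric.dist_le_diam_of_mem (hbdd x hx) ha hb
    rw [hdist] at this
    linarith
  -- every point of S is within 3D of x
  have hSx : ∀ y ∈ S, dist y x ≤ 3 * D := by
    intro y hy
    obtain ⟨hyX, z, hzG, hzT⟩ := hy
    obtain ⟨w, hwG, hzw⟩ := Metric.mem_thickening_iff.mp hzT
    by_cases hyx : y = x
    · simp [hyx, hD0]
    have hzy : dist y z < dist x z := by
      have := hG y hyX ▸ hzG
      exact this x ⟨hx, fun h => hyx (Set.mem_singleton_iff.mp h).symm⟩
    have hxw : dist x w ≤ D := Metric.dist_le_diam_of_mem (hbdd x hx)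
      (hball x hx (mem_ball_self h𝔯)) hwG
    have h1 : dist x z ≤ dist x w + dist w z := dist_triangle x w z
    have h2 : dist y x ≤ dist y z + dist z x := dist_triangle y z x
    have h3 : dist z x = dist x z := dist_comm z x
    have h4 : dist w z = dist z w := dist_comm w z
    linarith
  -- packing bound for any finite subset of S
  have key : ∀ F : Finset (EuclideanSpace ℝ (Fin d)), ↑F ⊆ S →
      (F.card : ℝ) ≤ (4 * D / 𝔯) ^ d := by
    intro F hF
    have hFpack : (F.card : ℝ) * 𝔯 ^ d ≤ (3 * D + 𝔯) ^ d := by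
      apply voronoi_pack d hd 𝔯 h𝔯 (3 * D) (by linarith) F
      · intro a ha b hb hab
        exact hX a (hF ha).1 b (hF hb).1 hab
      · intro y hy
        exact hSx y (hF hy)
    have hle : (3 * D + 𝔯) ^ d ≤ (4 * D) ^ d :=
      pow_le_pow_left₀ (by linarith) (by linarith) d
    have hrpos : (0:ℝ) < 𝔯 ^ d := by positivity
    rw [div_pow, le_div_iff₀ hrpos]
    linarith
  -- finiteness
  have hfin : S.Finite := by
    by_contra hinf
    obtain ⟨F, hFS, hFcard⟩ :=
      Set.Infinite.exists_subset_card_eq hinf (⌈(4 * D / 𝔯) ^ d⌉₊ + 1)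
    have h1 := key F hFS
    rw [hFcard] at h1
    have h2 : (4 * D / 𝔯) ^ d ≤ (⌈(4 * D / 𝔯) ^ d⌉₊ : ℝ) := Nat.le_ceil _
    push_cast at h1
    linarith
  refine ⟨hfin, ?_⟩
  have := key hfin.toFinset (by simp)
  rwa [← Set.ncard_eq_toFinset_card S hfin] at this
end

section
/- Let P ⊆ ℝ^d be locally η-regular with f and r̄ (as in the context) and define η(p) := sup{ η ∈ (0, r̄) : f(p,η) holds } (with sup ∅ = 0). Then for every ε ∈ (0,1/2) and all p, p̃ ∈ P with |p − p̃| < ε·η(p) one has η(p) − |p − p̃| ≤ η(p̃) ≤ ((1−ε)/(1−2ε))·η(p), and in particular η(p̃) > (1−ε)·η(p). Moreover, for every ε ∈ (0,1/2) and all p, p̃ ∈ P: if |p − p̃| ≤ ε·max{η(p), η(p̃)}, then |p − p̃| ≤ (ε/(1−ε))·min{η(p), η(p̃)}. -/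
/-!
If radius `x` is admissible at `p ∈ P` and `dist p q < x / 2`, propagation with a suitable `ε`
makes every radius below `x - dist p q` admissible at `q ∈ P`. Letting `x` tend to `η(p)` gives
`η(p) - dist p q ≤ η(q)` whenever `dist p q < η(p) / 2`; if moreover `η(p) < η(q)`, the roles of
`p` and `q` may be swapped, so `|η(p) - η(q)| ≤ dist p q` for such pairs. Both estimates of the
theorem are linear arithmetic on top of this.
-/

section RegularityRadius

variable {α : Type*}

noncomputable def regRadius (rbar : ℝ) (f : α → ℝ → Prop) (p : α) : ℝ :=
  sSup {η : ℝ | 0 < η ∧ η < rbar ∧ f p η}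

variable {rbar : ℝ} {f : α → ℝ → Prop}

theorem regRadius_nonneg (p : α) : 0 ≤ regRadius rbar f p :=
  Real.sSup_nonneg fun _ hη => hη.1.le

theorem le_regRadius {p : α} {η : ℝ} (h0 : 0 < η) (hr : η < rbar) (hf : f p η) :
    η ≤ regRadius rbar f p :=
  le_csSup ⟨rbar, fun _ hx => hx.2.1.le⟩ ⟨h0, hr, hf⟩

theorem exists_admissible_gt_of_lt_regRadius {p : α} {t : ℝ} (ht : 0 ≤ t)
    (h : t < regRadius rbar f p) : ∃ x, t < x ∧ x < rbar ∧ f p x := by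
  have hne : {η : ℝ | 0 < η ∧ η < rbar ∧ f p η}.Nonempty := by
    by_contra hempty
    rw [Set.not_nonempty_iff_eq_empty] at hempty
    rw [regRadius, hempty, Real.sSup_empty] at h
    linarith
  obtain ⟨x, ⟨-, hxr, hfx⟩, htx⟩ := exists_lt_of_lt_csSup hne h
  exact ⟨x, htx, hxr, hfx⟩

variable [PseudoMetricSpace α]

def PropagatesRegularity (P : Set α) (rbar : ℝ) (f : α → ℝ → Prop) : Prop :=
  ∀ p ∈ P, ∀ η : ℝ, 0 < η → η ≤ rbar → f p η →
    ∀ ε : ℝ, 0 < ε → ε < 1/2 → ∀ q ∈ P, dist p q < ε * η →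
      ∀ η₂ : ℝ, 0 < η₂ → η₂ < (1 - ε) * η → f q η₂

variable {P : Set α}

theorem PropagatesRegularity.of_dist_lt (hprop : PropagatesRegularity P rbar f)
    {p q : α} (hp : p ∈ P) (hq : q ∈ P) {x η₂ : ℝ} (hx : x ≤ rbar) (hfx : f p x)
    (hη₂ : 0 < η₂) (hd : dist p q < x / 2) (hdη₂ : η₂ + dist p q < x) : f q η₂ := by
  have hd0 : 0 ≤ dist p q := dist_nonneg
  have hx0 : 0 < x := by linarith
  have hmin : dist p q < min (x / 2) (x - η₂) := lt_min hd (by linarith)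
  obtain ⟨t, hdt, htmin⟩ := exists_between hmin
  have htx : t / x * x = t := div_mul_cancel₀ t hx0.ne'
  have hε2 : t / x < 1 / 2 := by
    rw [div_lt_iff₀ hx0]
    linarith [min_le_left (x / 2) (x - η₂)]
  refine hprop p hp x hx0 hx hfx (t / x) (div_pos (by linarith) hx0) hε2 q hq
    (by rwa [htx]) η₂ hη₂ ?_
  rw [sub_mul, one_mul, htx]
  linarith [min_le_right (x / 2) (x - η₂)]

theorem PropagatesRegularity.regRadius_sub_dist_le (hprop : PropagatesRegularity P rbar f)
    {p q : α} (hp : p ∈ P) (hq : q ∈ P) (hd : dist p q < regRadius rbar f p / 2) :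
    regRadius rbar f p - dist p q ≤ regRadius rbar f q := by
  refine le_of_forall_lt_imp_le_of_dense fun η₂ hη₂ => ?_
  rcases le_or_gt η₂ 0 with hle | hpos
  · exact hle.trans (regRadius_nonneg q)
  have hd0 : 0 ≤ dist p q := dist_nonneg
  have hm₁ := le_max_left (η₂ + dist p q) (2 * dist p q)
  have hm₂ := le_max_right (η₂ + dist p q) (2 * dist p q)
  obtain ⟨x, hmx, hxr, hfx⟩ := exists_admissible_gt_of_lt_regRadius (by linarith)
    (max_lt (by linarith) (by linarith) : max (η₂ + dist p q) (2 * dist p q) < regRadius rbar f p)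
  have hfq := hprop.of_dist_lt hp hq hxr.le hfx hpos (by linarith) (by linarith)
  exact le_regRadius hpos (by linarith) hfq

theorem PropagatesRegularity.regRadius_le_add_dist (hprop : PropagatesRegularity P rbar f)
    {p q : α} (hp : p ∈ P) (hq : q ∈ P) (hd : dist p q < regRadius rbar f p / 2) :
    regRadius rbar f q ≤ regRadius rbar f p + dist p q := by
  rcases le_or_gt (regRadius rbar f q) (regRadius rbar f p) with hle | hlt
  · exact le_add_of_le_of_nonneg hle dist_nonneg
  · have := hprop.regRadius_sub_dist_le hq hp (by rw [dist_comm]; linarith)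
    rw [dist_comm] at this
    linarith

theorem PropagatesRegularity.dist_le_div_one_sub_mul_regRadius
    (hprop : PropagatesRegularity P rbar f) {p q : α} (hp : p ∈ P) (hq : q ∈ P) {ε : ℝ}
    (hε : 0 ≤ ε) (hε2 : ε < 1/2) (hd : dist p q ≤ ε * regRadius rbar f p) :
    dist p q ≤ ε / (1 - ε) * regRadius rbar f q := by
  have hε1 : 0 < 1 - ε := by linarith
  rw [div_mul_eq_mul_div, le_div_iff₀ hε1]
  rcases (regRadius_nonneg p).eq_or_lt with h0 | h0
  · rw [← h0, mul_zero] at hd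
    rw [le_antisymm hd dist_nonneg, zero_mul]
    exact mul_nonneg hε (regRadius_nonneg q)
  · have hlower := hprop.regRadius_sub_dist_le hp hq
      (by linarith [mul_lt_mul_of_pos_right hε2 h0])
    linarith [mul_le_mul_of_nonneg_left hlower hε]

end RegularityRadius

theorem stmt2_general (d : ℕ) (P : Set (EuclideanSpace ℝ (Fin d))) (rbar : ℝ)
    (f : EuclideanSpace ℝ (Fin d) → ℝ → Prop)
    (hprop : ∀ p ∈ P, ∀ η : ℝ, 0 < η → η ≤ rbar → f p η →
      ∀ ε : ℝ, 0 < ε → ε < 1/2 → ∀ q ∈ P, dist p q < ε * η →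
        ∀ η₂ : ℝ, 0 < η₂ → η₂ < (1 - ε) * η → f q η₂)
    (ηf : EuclideanSpace ℝ (Fin d) → ℝ)
    (hη : ∀ p, ηf p = sSup {η : ℝ | 0 < η ∧ η < rbar ∧ f p η}) :
    (∀ ε : ℝ, 0 < ε → ε < 1/2 → ∀ p ∈ P, ∀ q ∈ P, dist p q < ε * ηf p →
      ηf p - dist p q ≤ ηf q ∧ ηf q ≤ (1 - ε) / (1 - 2*ε) * ηf p ∧
        (1 - ε) * ηf p < ηf q) ∧
    (∀ ε : ℝ, 0 < ε → ε < 1/2 → ∀ p ∈ P, ∀ q ∈ P,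
      dist p q ≤ ε * max (ηf p) (ηf q) →
      dist p q ≤ ε / (1 - ε) * min (ηf p) (ηf q)) := by
  obtain rfl : ηf = regRadius rbar f := funext hη
  have hprop : PropagatesRegularity P rbar f := hprop
  refine ⟨fun ε hε hε2 p hp q hq hd => ?_, fun ε hε hε2 p hp q hq hd => ?_⟩
  · have hp0 := regRadius_nonneg (rbar := rbar) (f := f) p
    have hd2 : dist p q < regRadius rbar f p / 2 := by
      linarith [mul_le_mul_of_nonneg_right hε2.le hp0]
    have hlower := hprop.regRadius_sub_dist_le hp hq hd2
    have hupper := hprop.regRadius_le_add_dist hp hq hd2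
    -- `1 + ε ≤ (1 - ε) / (1 - 2ε)` because `(1 + ε)(1 - 2ε) = 1 - ε - 2ε²`
    have hfactor : 1 + ε ≤ (1 - ε) / (1 - 2 * ε) := by
      rw [le_div_iff₀ (by linarith)]
      nlinarith
    refine ⟨hlower, ?_, by linarith⟩
    calc regRadius rbar f q ≤ regRadius rbar f p + dist p q := hupper
      _ ≤ (1 + ε) * regRadius rbar f p := by linarith
      _ ≤ (1 - ε) / (1 - 2 * ε) * regRadius rbar f p := by gcongr
  · rcases le_total (regRadius rbar f q) (regRadius rbar f p) with hle | hle
    · rw [max_eq_left hle] at hd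
      rw [min_eq_right hle]
      exact hprop.dist_le_div_one_sub_mul_regRadius hp hq hε.le hε2 hd
    · rw [max_eq_right hle, dist_comm] at hd
      rw [min_eq_left hle, dist_comm]
      exact hprop.dist_le_div_one_sub_mul_regRadius hq hp hε.le hε2 hd

/-- **Local Lipschitz continuity of the regularity radius** (Lemma 2.14 of the paper).
`P ⊆ ℝ^d` is locally `η`-regular with predicate `f` and `rbar > 0`: `f p ·` is monotone
(decreasing in the radius) and satisfies the propagation property.  With
`η(p) := sup {η ∈ (0,rbar) : f p η}` (sup ∅ = 0), for every `ε ∈ (0,1/2)` and `p, q ∈ P` with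
`|p-q| < ε η(p)` one has `η(p) - |p-q| ≤ η(q) ≤ (1-ε)/(1-2ε) · η(p)` and
`η(q) > (1-ε) η(p)`; moreover `|p-q| ≤ ε max{η(p),η(q)}` implies
`|p-q| ≤ ε/(1-ε) · min{η(p),η(q)}`. -/
theorem stmt2 (d : ℕ) (P : Set (EuclideanSpace ℝ (Fin d))) (rbar : ℝ) (hr : 0 < rbar)
    (f : EuclideanSpace ℝ (Fin d) → ℝ → Prop)
    (hmono : ∀ p ∈ P, ∀ η η' : ℝ, 0 < η' → η' ≤ η → η ≤ rbar → f p η → f p η')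
    (hprop : ∀ p ∈ P, ∀ η : ℝ, 0 < η → η ≤ rbar → f p η →
      ∀ ε : ℝ, 0 < ε → ε < 1/2 → ∀ q ∈ P, dist p q < ε * η →
        ∀ η₂ : ℝ, 0 < η₂ → η₂ < (1 - ε) * η → f q η₂)
    (ηf : EuclideanSpace ℝ (Fin d) → ℝ)
    (hη : ∀ p, ηf p = sSup {η : ℝ | 0 < η ∧ η < rbar ∧ f p η}) :
    (∀ ε : ℝ, 0 < ε → ε < 1/2 → ∀ p ∈ P, ∀ q ∈ P, dist p q < ε * ηf p →
      ηf p - dist p q ≤ ηf q ∧ ηf q ≤ (1 - ε) / (1 - 2*ε) * ηf p ∧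
        (1 - ε) * ηf p < ηf q) ∧
    (∀ ε : ℝ, 0 < ε → ε < 1/2 → ∀ p ∈ P, ∀ q ∈ P,
      dist p q ≤ ε * max (ηf p) (ηf q) →
      dist p q ≤ ε / (1 - ε) * min (ηf p) (ηf q)) :=
  stmt2_general d P rbar f hprop ηf hη
end

section
/- Let d ≥ 1, let Γ ⊆ ℝ^d be a nonempty closed set, and let η : Γ → ℝ be continuous, bounded and strictly positive, satisfying: for every ε ∈ (0,1/2) and all p, p̃ ∈ Γ with |p − p̃| < ε·η(p), one has (1−ε)·η(p) ≤ η(p̃) ≤ ((1−ε)/(1−2ε))·η(p). For an integer K ≥ 2 set η̃ := 2^{−K}·η. Then for every C ∈ (0,1) there exists a countable family of points (p_k)_{k∈ℕ} ⊆ Γ such that: (i) Γ ⊆ ⋃_k B(p_k, η̃(p_k)); (ii) the family of balls is locally finite, i.e. every bounded subset of ℝ^d intersects only finitely many of the balls B(p_k, η̃(p_k)); and (iii) whenever i ≠ k and B(p_i, η̃(p_i)) ∩ B(p_k, η̃(p_k)) ≠ ∅, one has ((2^{K−1}−1)/2^{K−1})·η̃(p_i) ≤ η̃(p_k) ≤ (2^{K−1}/(2^{K−1}−1))·η̃(p_i)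 and C·max{η̃(p_i), η̃(p_k)} ≤ |p_i − p_k| ≤ ((2^K−1)/(2^{K−1}−1))·min{η̃(p_i), η̃(p_k)}. -/
/-!
Sort the points of `Γ` into the layers where `r` lies in `(C ^ (j + 1) * R, C ^ j * R]` and go
through the layers in order, taking in each a maximal `C ^ (j + 1) * R`-separated set of the points
not yet covered by earlier balls. The lower bound of a layer makes its net cover it and the upper
bound makes the separation at least `C` times the radii; a center of a later layer lies outside
the earlier balls, whose radii are larger. A bounded set meets only finitely many layers, since
`r` is continuous and positive on the compact pieces of `Γ`, and separated bounded sets are finite.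
The comparison of the radii and centers of two intersecting balls uses only the slow variation
of `η`.
-/

open Metric Set Bornology
open scoped NNReal ENNReal

section RadiusLayer

variable {X : Type*} (r : X → ℝ) (R C : ℝ)

def radiusLayer (j : ℕ) : Set X := {x | C ^ (j + 1) * R < r x ∧ r x ≤ C ^ j * R}

variable {r R C} in
theorem exists_mem_radiusLayer (hC0 : 0 < C) (hC1 : C < 1) {x : X} (hx : 0 < r x)
    (hxR : r x ≤ R) : ∃ j, x ∈ radiusLayer r R C j := by
  have hR : 0 < R := hx.trans_le hxR
  obtain ⟨j, hlt, hle⟩ := exists_nat_pow_near_of_lt_one (div_pos hx hR)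
    ((div_le_one hR).2 hxR) hC0 hC1
  exact ⟨j, (lt_div_iff₀ hR).1 hlt, (div_le_iff₀ hR).1 hle⟩

end RadiusLayer

section

variable {X : Type*} [MetricSpace X]

theorem exists_separatedNet (ε : ℝ≥0) (s : Set X) :
    ∃ N ⊆ s, N.Pairwise (fun x y ↦ ε < dist x y) ∧ ∀ x ∈ s, ∃ y ∈ N, dist x y ≤ ε := by
  obtain ⟨N, hN⟩ := zorn_subset {N | N ⊆ s ∧ IsSeparated ε N} fun c hcs hc ↦
    ⟨⋃₀ c, ⟨sUnion_subset fun N hN ↦ (hcs hN).1, hc.pairwise_sUnion.2 fun N hN ↦ (hcs hN).2⟩,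
      fun _ ↦ subset_sUnion_of_mem⟩
  refine ⟨N, hN.prop.1, fun x hx y hy hxy ↦ ?_, fun x hx ↦ ?_⟩
  · have hsep : (ε : ℝ≥0∞) < edist x y := hN.prop.2 hx hy hxy
    rwa [edist_nndist, ENNReal.coe_lt_coe, ← NNReal.coe_lt_coe, coe_nndist] at hsep
  · obtain ⟨y, hy, hxy⟩ := IsCover.of_maximal_isSeparated hN hx
    replace hxy : edist x y ≤ ε := hxy
    refine ⟨y, hy, ?_⟩
    rwa [edist_nndist, ENNReal.coe_le_coe, ← NNReal.coe_le_coe, coe_nndist] at hxy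

theorem finite_of_isBounded_of_pairwise_le_dist [ProperSpace X] {s : Set X} {ε : ℝ} (hε : 0 < ε)
    (hs : s.Pairwise fun x y ↦ ε ≤ dist x y) (hb : IsBounded s) : s.Finite := by
  obtain ⟨t, hts, htfin, hcov⟩ := finite_cover_balls_of_compact
    (isCompact_of_isClosed_isBounded (isClosed_of_pairwise_le_dist hε hs) hb) hε
  refine htfin.subset fun y hy ↦ ?_
  obtain ⟨x, hx, hyx⟩ := mem_iUnion₂.1 (hcov hy)
  by_contra hyt
  exact (hs hy (hts hx) (ne_of_mem_of_not_mem hx hyt).symm).not_gt hyx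

theorem countable_of_forall_finite_inter_isBounded {S : Set X}
    (hS : ∀ B, IsBounded B → (S ∩ B).Finite) : S.Countable := by
  rcases S.eq_empty_or_nonempty with rfl | ⟨x, -⟩
  · exact countable_empty
  rw [← inter_univ S, ← iUnion_closedBall_nat x, inter_iUnion]
  exact countable_iUnion fun n ↦ (hS _ isBounded_closedBall).countable

theorem exists_pos_forall_le_of_isBounded [ProperSpace X] {Γ B : Set X} {r : X → ℝ}
    (hΓ : IsClosed Γ) (hr : ContinuousOn r Γ) (hpos : ∀ x ∈ Γ, 0 < r x) (hB : IsBounded B) :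
    ∃ δ > 0, ∀ x ∈ Γ ∩ B, δ ≤ r x := by
  have hK : IsCompact (Γ ∩ closure B) := hB.isCompact_closure.inter_left hΓ
  rcases (Γ ∩ closure B).eq_empty_or_nonempty with hempty | hne
  · exact ⟨1, one_pos, fun x hx ↦ (hempty.subset ⟨hx.1, subset_closure hx.2⟩ : x ∈ ∅).elim⟩
  obtain ⟨z, hz, hmin⟩ := hK.exists_isMinOn hne (hr.mono inter_subset_left)
  exact ⟨r z, hpos z hz.1, fun x hx ↦ hmin ⟨hx.1, subset_closure hx.2⟩⟩

section Greedy

variable (Γ : Set X) (r : X → ℝ) (R C : ℝ)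

noncomputable def layerNet (T : Set X) (j : ℕ) : Set X :=
  (exists_separatedNet (C ^ (j + 1) * R).toNNReal
    ((Γ ∩ radiusLayer r R C j) \ ⋃ p ∈ T, ball p (r p))).choose

noncomputable def greedyCenters : ℕ → Set X
  | 0 => ∅
  | j + 1 => greedyCenters j ∪ layerNet Γ r R C (greedyCenters j) j

noncomputable def layeredCenters : Set X := ⋃ j, layerNet Γ r R C (greedyCenters Γ r R C j) j

variable {Γ r R C}

theorem layerNet_spec (T : Set X) (j : ℕ) :
    let A := (Γ ∩ radiusLayer r R C j) \ ⋃ p ∈ T, ball p (r p)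
    layerNet Γ r R C T j ⊆ A ∧
      (layerNet Γ r R C T j).Pairwise (fun x y ↦ (C ^ (j + 1) * R).toNNReal < dist x y) ∧
      ∀ x ∈ A, ∃ y ∈ layerNet Γ r R C T j, dist x y ≤ (C ^ (j + 1) * R).toNNReal :=
  (exists_separatedNet _ _).choose_spec

theorem layerNet_pairwise (T : Set X) (j : ℕ) :
    (layerNet Γ r R C T j).Pairwise fun x y ↦ C ^ (j + 1) * R < dist x y :=
  (layerNet_spec T j).2.1.mono' fun _ _ h ↦ (Real.le_coe_toNNReal _).trans_lt h

theorem exists_mem_ball_layerNet (hpos : ∀ x ∈ Γ, 0 < r x) {T : Set X} {j : ℕ} {x : X}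
    (hx : x ∈ (Γ ∩ radiusLayer r R C j) \ ⋃ p ∈ T, ball p (r p)) :
    ∃ y ∈ layerNet Γ r R C T j, x ∈ ball y (r y) := by
  obtain ⟨hsub, -, hcov⟩ := layerNet_spec T j
  obtain ⟨y, hy, hxy⟩ := hcov x hx
  obtain ⟨⟨hyΓ, hyj, -⟩, -⟩ := hsub hy
  refine ⟨y, hy, hxy.trans_lt ?_⟩
  rw [Real.coe_toNNReal']
  exact max_lt hyj (hpos y hyΓ)

theorem layerNet_subset_greedyCenters {i j : ℕ} (hij : i < j) :
    layerNet Γ r R C (greedyCenters Γ r R C i) i ⊆ greedyCenters Γ r R C j :=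
  subset_union_right.trans <|
    monotone_nat_of_le_succ (fun _ ↦ subset_union_left) (f := greedyCenters Γ r R C) hij

theorem greedyCenters_subset_layeredCenters (j : ℕ) :
    greedyCenters Γ r R C j ⊆ layeredCenters Γ r R C := by
  induction j with
  | zero => exact empty_subset _
  | succ j ih => exact union_subset ih (subset_iUnion_of_subset j subset_rfl)

theorem layeredCenters_subset : layeredCenters Γ r R C ⊆ Γ :=
  iUnion_subset fun j ↦ (layerNet_spec _ j).1.trans (sdiff_subset.trans inter_subset_left)

theorem mul_max_le_dist_of_mem_layerNet (hC0 : 0 ≤ C) (hC1 : C ≤ 1) (hR : 0 ≤ R) {i j : ℕ}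
    (hij : i ≤ j) {p q : X} (hp : p ∈ layerNet Γ r R C (greedyCenters Γ r R C i) i)
    (hq : q ∈ layerNet Γ r R C (greedyCenters Γ r R C j) j) (hpq : p ≠ q) :
    C * max (r p) (r q) ≤ dist p q := by
  obtain ⟨⟨-, hpi⟩, -⟩ := (layerNet_spec _ i).1 hp
  obtain ⟨⟨-, hqj⟩, hq_far⟩ := (layerNet_spec _ j).1 hq
  rcases hij.lt_or_eq with hij | rfl
  · have hp_dist : r p ≤ dist p q := by
      by_contra! h
      exact hq_far (mem_biUnion (layerNet_subset_greedyCenters hij hp) (mem_ball'.2 h))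
    have hrq : r q ≤ r p := calc
      r q ≤ C ^ j * R := hqj.2
      _ ≤ C ^ (i + 1) * R := mul_le_mul_of_nonneg_right (pow_le_pow_of_le_one hC0 hC1 hij) hR
      _ ≤ r p := hpi.1.le
    have hrp : 0 ≤ r p := (by positivity : 0 ≤ C ^ (i + 1) * R).trans hpi.1.le
    calc C * max (r p) (r q) ≤ max (r p) (r q) :=
          mul_le_of_le_one_left (le_max_of_le_left hrp) hC1
      _ = r p := max_eq_left hrq
      _ ≤ dist p q := hp_dist
  · calc C * max (r p) (r q) ≤ C * (C ^ i * R) := by gcongr; exact max_le hpi.2 hqj.2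
      _ = C ^ (i + 1) * R := by ring
      _ ≤ dist p q := (layerNet_pairwise _ i hp hq hpq).le

theorem layeredCenters_pairwise (hC0 : 0 ≤ C) (hC1 : C ≤ 1) (hR : 0 ≤ R) :
    (layeredCenters Γ r R C).Pairwise fun p q ↦ C * max (r p) (r q) ≤ dist p q := by
  rintro p hp q hq hpq
  obtain ⟨i, hp⟩ := mem_iUnion.1 hp
  obtain ⟨j, hq⟩ := mem_iUnion.1 hq
  rcases le_total i j with hij | hji
  · exact mul_max_le_dist_of_mem_layerNet hC0 hC1 hR hij hp hq hpq
  · rw [max_comm, dist_comm]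
    exact mul_max_le_dist_of_mem_layerNet hC0 hC1 hR hji hq hp hpq.symm

theorem subset_iUnion_ball_layeredCenters (hpos : ∀ x ∈ Γ, 0 < r x)
    (hrR : ∀ x ∈ Γ, r x ≤ R) (hC0 : 0 < C) (hC1 : C < 1) :
    Γ ⊆ ⋃ p ∈ layeredCenters Γ r R C, ball p (r p) := by
  intro x hx
  obtain ⟨j, hj⟩ := exists_mem_radiusLayer hC0 hC1 (hpos x hx) (hrR x hx)
  by_cases hcov : x ∈ ⋃ p ∈ greedyCenters Γ r R C j, ball p (r p)
  · exact biUnion_mono (greedyCenters_subset_layeredCenters j) (fun _ _ ↦ subset_rfl) hcov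
  · obtain ⟨y, hy, hxy⟩ := exists_mem_ball_layerNet hpos ⟨⟨hx, hj⟩, hcov⟩
    exact mem_biUnion (mem_iUnion_of_mem j hy) hxy

theorem finite_layeredCenters_inter [ProperSpace X] (hΓ : IsClosed Γ) (hcont : ContinuousOn r Γ)
    (hpos : ∀ x ∈ Γ, 0 < r x) (hC0 : 0 < C) (hC1 : C < 1) (hR : 0 < R) {B : Set X}
    (hB : IsBounded B) : (layeredCenters Γ r R C ∩ B).Finite := by
  obtain ⟨δ, hδ, hδle⟩ := exists_pos_forall_le_of_isBounded hΓ hcont hpos hB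
  obtain ⟨N, hN⟩ := exists_pow_lt_of_lt_one (div_pos hδ hR) hC1
  refine ((finite_lt_nat N).biUnion
    (t := fun j ↦ layerNet Γ r R C (greedyCenters Γ r R C j) j ∩ B) fun j _ ↦ ?_).subset ?_
  · exact finite_of_isBounded_of_pairwise_le_dist (by positivity : 0 < C ^ (j + 1) * R)
      (((layerNet_pairwise _ j).mono inter_subset_left).mono' fun _ _ ↦ le_of_lt)
      (hB.subset inter_subset_right)
  · rintro p ⟨hp, hpB⟩
    obtain ⟨j, hpj⟩ := mem_iUnion.1 hp
    have hj : C ^ N * R < C ^ j * R := calc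
      C ^ N * R < δ := (lt_div_iff₀ hR).1 hN
      _ ≤ r p := hδle p ⟨layeredCenters_subset hp, hpB⟩
      _ ≤ C ^ j * R := ((layerNet_spec _ j).1 hpj).1.2.2
    exact mem_biUnion ((pow_lt_pow_iff_right_of_lt_one₀ hC0 hC1).1
      (lt_of_mul_lt_mul_right hj hR.le)) ⟨hpj, hpB⟩

end Greedy

theorem exists_countable_separated_ball_cover [ProperSpace X] {Γ : Set X} (hΓ : IsClosed Γ)
    {r : X → ℝ} (hcont : ContinuousOn r Γ) (hpos : ∀ x ∈ Γ, 0 < r x) (hbdd : BddAbove (r '' Γ))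
    {C : ℝ} (hC0 : 0 < C) (hC1 : C < 1) :
    ∃ S ⊆ Γ, S.Countable ∧ (Γ ⊆ ⋃ p ∈ S, ball p (r p)) ∧
      (∀ B, IsBounded B → {p ∈ S | (ball p (r p) ∩ B).Nonempty}.Finite) ∧
      S.Pairwise fun p q ↦ C * max (r p) (r q) ≤ dist p q := by
  obtain ⟨R, hR⟩ := hbdd
  have hrR : ∀ x ∈ Γ, r x ≤ max R 1 := fun x hx ↦ (hR (mem_image_of_mem r hx)).trans
    (le_max_left _ _)
  have hR0 : 0 < max R 1 := lt_max_of_lt_right one_pos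
  have hfin B (hB : IsBounded B) := finite_layeredCenters_inter hΓ hcont hpos hC0 hC1 hR0 hB
  refine ⟨layeredCenters Γ r (max R 1) C, layeredCenters_subset,
    countable_of_forall_finite_inter_isBounded hfin,
    subset_iUnion_ball_layeredCenters hpos hrR hC0 hC1, fun B hB ↦ ?_,
    layeredCenters_pairwise hC0.le hC1.le hR0.le⟩
  refine (hfin _ (hB.thickening (δ := max R 1))).subset ?_
  rintro p ⟨hp, y, hyp, hyB⟩
  exact ⟨hp, mem_thickening_iff.2
    ⟨y, hyB, (mem_ball'.1 hyp).trans_le (hrR p (layeredCenters_subset hp))⟩⟩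


end

section SlowlyVarying

variable {X : Type*} [MetricSpace X] {Γ : Set X} {η : X → ℝ} {A : ℝ} {p q : X}

theorem mul_le_of_dist_lt_of_slowlyVarying (hA : 2 ≤ A) (hpos : ∀ p ∈ Γ, 0 < η p)
    (hslow : ∀ ε : ℝ, 0 < ε → ε < 1 / 2 → ∀ p ∈ Γ, ∀ q ∈ Γ, dist p q < ε * η p →
      (1 - ε) * η p ≤ η q)
    (hp : p ∈ Γ) (hq : q ∈ Γ) (hd : dist p q < η p / (2 * A) + η q / (2 * A)) :
    (A - 1) / A * η p ≤ η q := by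
  have hηp := hpos p hp
  have hηq := hpos q hq
  have hA0 : 0 < A := by linarith
  rcases le_or_gt (η p) (η q) with hle | hlt
  · exact (mul_le_of_le_one_left hηp.le ((div_le_one hA0).2 (by linarith))).trans hle
  set ε := (η p + η q) / (2 * A * η p)
  have hεA : ε < 1 / A := by
    rw [div_lt_div_iff₀ (by positivity) hA0]
    nlinarith
  have hε : ε * η p = η p / (2 * A) + η q / (2 * A) := by
    simp only [ε]
    field_simp
  calc (A - 1) / A * η p = (1 - 1 / A) * η p := by field_simp
    _ ≤ (1 - ε) * η p := by gcongr
    _ ≤ η q := hslow ε (by positivity)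
        (hεA.trans_le (one_div_le_one_div_of_le two_pos hA)) p hp q hq (hε ▸ hd)

theorem radius_bounds_of_balls_meet (hA : 2 ≤ A) (hpos : ∀ p ∈ Γ, 0 < η p)
    (hslow : ∀ ε : ℝ, 0 < ε → ε < 1 / 2 → ∀ p ∈ Γ, ∀ q ∈ Γ, dist p q < ε * η p →
      (1 - ε) * η p ≤ η q)
    (hp : p ∈ Γ) (hq : q ∈ Γ)
    (hmeet : (ball p (η p / (2 * A)) ∩ ball q (η q / (2 * A))).Nonempty) :
    (A - 1) / A * (η p / (2 * A)) ≤ η q / (2 * A) ∧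
      η q / (2 * A) ≤ A / (A - 1) * (η p / (2 * A)) ∧
      dist p q ≤ (2 * A - 1) / (A - 1) * min (η p / (2 * A)) (η q / (2 * A)) := by
  obtain ⟨y, hyp, hyq⟩ := hmeet
  have hd : dist p q < η p / (2 * A) + η q / (2 * A) :=
    (dist_triangle_right p q y).trans_lt (add_lt_add (mem_ball'.1 hyp) (mem_ball'.1 hyq))
  have hA1 : 0 < A - 1 := by linarith
  have hlower {p q} (hp : p ∈ Γ) (hq : q ∈ Γ) (hd : dist p q < η p / (2 * A) + η q / (2 * A)) :
      (A - 1) / A * (η p / (2 * A)) ≤ η q / (2 * A) := by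
    rw [← mul_div_assoc]
    exact div_le_div_of_nonneg_right
      (mul_le_of_dist_lt_of_slowlyVarying hA hpos hslow hp hq hd) (by linarith)
  have hupper {p q} (hp : p ∈ Γ) (hq : q ∈ Γ) (hd : dist p q < η p / (2 * A) + η q / (2 * A)) :
      η q / (2 * A) ≤ A / (A - 1) * (η p / (2 * A)) := calc
    η q / (2 * A) = A / (A - 1) * ((A - 1) / A * (η q / (2 * A))) := by field_simp
    _ ≤ A / (A - 1) * (η p / (2 * A)) := by
      gcongr
      exact hlower hq hp (by rwa [dist_comm, add_comm])
  have hqp : dist q p < η q / (2 * A) + η p / (2 * A) := by rwa [dist_comm, add_comm]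
  have hq_le := hupper hp hq hd
  have hp_le := hupper hq hp hqp
  refine ⟨hlower hp hq hd, hq_le, ?_⟩
  rw [mul_min_of_nonneg _ _ (div_nonneg (by linarith) hA1.le)]
  refine le_min ?_ ?_
  · calc dist p q ≤ η p / (2 * A) + η q / (2 * A) := hd.le
      _ ≤ η p / (2 * A) + A / (A - 1) * (η p / (2 * A)) := by gcongr
      _ = (2 * A - 1) / (A - 1) * (η p / (2 * A)) := by field_simp; ring
  · calc dist p q ≤ η q / (2 * A) + η p / (2 * A) := by rw [add_comm]; exact hd.le
      _ ≤ η q / (2 * A) + A / (A - 1) * (η q / (2 * A)) := by gcongr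
      _ = (2 * A - 1) / (A - 1) * (η q / (2 * A)) := by field_simp; ring

end SlowlyVarying

theorem stmt3_general (d : ℕ) (Γ : Set (EuclideanSpace ℝ (Fin d)))
    (hΓc : IsClosed Γ)
    (η : EuclideanSpace ℝ (Fin d) → ℝ)
    (hcont : ContinuousOn η Γ)
    (hbdd : ∃ M : ℝ, ∀ p ∈ Γ, η p ≤ M)
    (hpos : ∀ p ∈ Γ, 0 < η p)
    (hslow : ∀ ε : ℝ, 0 < ε → ε < 1/2 → ∀ p ∈ Γ, ∀ q ∈ Γ, dist p q < ε * η p →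
      (1 - ε) * η p ≤ η q ∧ η q ≤ (1 - ε) / (1 - 2*ε) * η p)
    (K : ℕ) (hK : 2 ≤ K) :
    ∀ C : ℝ, 0 < C → C < 1 →
      ∃ S : Set (EuclideanSpace ℝ (Fin d)), S.Countable ∧ S ⊆ Γ ∧
        (Γ ⊆ ⋃ p ∈ S, Metric.ball p (η p / 2 ^ K)) ∧
        (∀ B : Set (EuclideanSpace ℝ (Fin d)), Bornology.IsBounded B →
          {p ∈ S | (Metric.ball p (η p / 2 ^ K) ∩ B).Nonempty}.Finite) ∧
        (∀ p ∈ S, ∀ q ∈ S, p ≠ q →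
          (Metric.ball p (η p / 2 ^ K) ∩ Metric.ball q (η q / 2 ^ K)).Nonempty →
          (((2:ℝ) ^ (K-1) - 1) / 2 ^ (K-1) * (η p / 2 ^ K) ≤ η q / 2 ^ K ∧
           η q / 2 ^ K ≤ (2:ℝ) ^ (K-1) / ((2:ℝ) ^ (K-1) - 1) * (η p / 2 ^ K) ∧
           C * max (η p / 2 ^ K) (η q / 2 ^ K) ≤ dist p q ∧
           dist p q ≤ ((2:ℝ) ^ K - 1) / ((2:ℝ) ^ (K-1) - 1) *
             min (η p / 2 ^ K) (η q / 2 ^ K))) := by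
  intro C hC0 hC1
  obtain ⟨k, rfl⟩ : ∃ k, K = k + 1 := ⟨K - 1, by omega⟩
  have hA : (2 : ℝ) ≤ 2 ^ k := le_self_pow₀ one_le_two (by omega)
  -- the radii `η / 2 ^ K` become `η / (2 * A)` with `A = 2 ^ (K - 1)`
  rw [Nat.add_sub_cancel, pow_succ']
  obtain ⟨M, hM⟩ := hbdd
  have hbdd' : BddAbove ((fun p ↦ η p / (2 * 2 ^ k)) '' Γ) :=
    ⟨M / (2 * 2 ^ k), forall_mem_image.2 fun p hp ↦ by gcongr; exact hM p hp⟩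
  obtain ⟨S, hSΓ, hcount, hcover, hfin, hsep⟩ := exists_countable_separated_ball_cover hΓc
    (hcont.div_const _) (fun p hp ↦ by have := hpos p hp; positivity) hbdd' hC0 hC1
  refine ⟨S, hcount, hSΓ, hcover, hfin, fun p hp q hq hpq hmeet ↦ ?_⟩
  obtain ⟨hq_ge, hq_le, hdist⟩ := radius_bounds_of_balls_meet hA hpos
    (fun ε hε0 hε1 p hp q hq hd ↦ (hslow ε hε0 hε1 p hp q hq hd).1) (hSΓ hp) (hSΓ hq) hmeet
  exact ⟨hq_ge, hq_le, hsep hp hq hpq, hdist⟩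

/-- **Covering theorem** (Theorem 2.15 of the paper).  Let `Γ ⊆ ℝ^d` be nonempty and closed and
let `η : Γ → ℝ` be continuous, bounded, strictly positive and slowly varying in the sense that
`|p-q| < ε η(p)` implies `(1-ε) η(p) ≤ η(q) ≤ (1-ε)/(1-2ε) η(p)`.  With `η' := 2^{-K} η`,
`K ≥ 2`, for every `C ∈ (0,1)` there is a countable set `S ⊆ Γ` of centers such that the balls
`B(p, η'(p))`, `p ∈ S`, cover `Γ`, form a locally finite family, and any two intersecting balls
have comparable radii and centers at distance between `C·max` and
`(2^K-1)/(2^{K-1}-1)·min` of the two radii. -/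
theorem stmt3 (d : ℕ) (hd : 1 ≤ d) (Γ : Set (EuclideanSpace ℝ (Fin d)))
    (hΓc : IsClosed Γ) (hΓne : Γ.Nonempty)
    (η : EuclideanSpace ℝ (Fin d) → ℝ)
    (hcont : ContinuousOn η Γ)
    (hbdd : ∃ M : ℝ, ∀ p ∈ Γ, η p ≤ M)
    (hpos : ∀ p ∈ Γ, 0 < η p)
    (hslow : ∀ ε : ℝ, 0 < ε → ε < 1/2 → ∀ p ∈ Γ, ∀ q ∈ Γ, dist p q < ε * η p →
      (1 - ε) * η p ≤ η q ∧ η q ≤ (1 - ε) / (1 - 2*ε) * η p)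
    (K : ℕ) (hK : 2 ≤ K) :
    ∀ C : ℝ, 0 < C → C < 1 →
      ∃ S : Set (EuclideanSpace ℝ (Fin d)), S.Countable ∧ S ⊆ Γ ∧
        (Γ ⊆ ⋃ p ∈ S, Metric.ball p (η p / 2 ^ K)) ∧
        (∀ B : Set (EuclideanSpace ℝ (Fin d)), Bornology.IsBounded B →
          {p ∈ S | (Metric.ball p (η p / 2 ^ K) ∩ B).Nonempty}.Finite) ∧
        (∀ p ∈ S, ∀ q ∈ S, p ≠ q →
          (Metric.ball p (η p / 2 ^ K) ∩ Metric.ball q (η q / 2 ^ K)).Nonempty →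
          (((2:ℝ) ^ (K-1) - 1) / 2 ^ (K-1) * (η p / 2 ^ K) ≤ η q / 2 ^ K ∧
           η q / 2 ^ K ≤ (2:ℝ) ^ (K-1) / ((2:ℝ) ^ (K-1) - 1) * (η p / 2 ^ K) ∧
           C * max (η p / 2 ^ K) (η q / 2 ^ K) ≤ dist p q ∧
           dist p q ≤ ((2:ℝ) ^ K - 1) / ((2:ℝ) ^ (K-1) - 1) *
             min (η p / 2 ^ K) (η q / 2 ^ K))) :=
  stmt3_general d Γ hΓc η hcont hbdd hpos hslow K hK
end

section
/- Let n ∈ ℕ and let (α_i)_{i=1}^n and (u_i)_{i=1}^n be real numbers with Σ_{i=1}^n α_i = 0. Set α_+ := Σ_{i : α_i > 0} α_i. Then Σ_{i=1}^n α_i u_i = Σ_{i : α_i > 0} Σ_{j : α_j < 0} (α_i·|α_j| / α_+)·(u_i − u_j). (When α_+ = 0, all α_i vanish and both sides are 0, the double sum being empty.) -/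
/-- **Rewriting identity for sums with zero total weight** (Lemma 5.4 of the paper).
If `∑ i, α i = 0` and `α₊ = ∑_{α i > 0} α i`, then
`∑ i, α i * u i = ∑_{α i > 0} ∑_{α j < 0} (α i * |α j| / α₊) * (u i - u j)`.
(When `α₊ = 0` all `α i` vanish and both sides are `0`; in Lean division by zero yields `0`.) -/
theorem stmt6 (n : ℕ) (α u : Fin n → ℝ) (hα : ∑ i, α i = 0) :
    ∑ i, α i * u i =
      ∑ i ∈ Finset.univ.filter (fun i : Fin n => 0 < α i),
        ∑ j ∈ Finset.univ.filter (fun j : Fin n => α j < 0),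
          (α i * |α j| / (∑ k ∈ Finset.univ.filter (fun k : Fin n => 0 < α k), α k)) *
            (u i - u j) := by
  classical
  set P := Finset.univ.filter (fun i : Fin n => 0 < α i) with hP
  set N := Finset.univ.filter (fun j : Fin n => α j < 0) with hN
  set A := ∑ k ∈ P, α k with hA
  have key : ∀ v : Fin n → ℝ, ∑ i, α i * v i = ∑ i ∈ P, α i * v i + ∑ j ∈ N, α j * v j := by
    intro v
    rw [← Finset.sum_filter_add_sum_filter_not Finset.univ (fun i => 0 < α i) (fun i => α i * v i)]
    congr 1
    refine (Finset.sum_subset ?_ ?_).symm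
    · intro j hj
      simp only [hN, Finset.mem_filter, Finset.mem_univ, true_and] at hj ⊢
      linarith
    · intro j hj hjN
      simp only [hN, Finset.mem_filter, Finset.mem_univ, true_and, not_lt] at hj hjN ⊢
      have : α j = 0 := le_antisymm hj hjN
      simp [this]
  have habs : ∀ j ∈ N, |α j| = -α j := by
    intro j hj
    simp only [hN, Finset.mem_filter, Finset.mem_univ, true_and] at hj
    exact abs_of_neg hj
  have hNsum : ∑ j ∈ N, α j = -A := by
    have h1 := key (fun _ => 1)
    simp only [mul_one] at h1
    rw [hα] at h1
    linarith
  rcases eq_or_ne A 0 with h0 | h0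
  · have hPempty : P = ∅ := by
      by_contra h
      obtain ⟨i, hi⟩ := Finset.nonempty_iff_ne_empty.mpr h
      have hpos : 0 < A := Finset.sum_pos (fun k hk => by
        simp only [hP, Finset.mem_filter, Finset.mem_univ, true_and] at hk; exact hk) ⟨i, hi⟩
      exact hpos.ne' h0
    have hzero : ∀ i, α i = 0 := by
      have hle : ∀ i ∈ Finset.univ, α i ≤ 0 := by
        intro i _
        by_contra h
        have : i ∈ P := by
          simp only [hP, Finset.mem_filter, Finset.mem_univ, true_and]; linarith
        simp [hPempty] at this
      intro i
      exact (Finset.sum_eq_zero_iff_of_nonpos hle).mp hα i (Finset.mem_univ i)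
    simp [hPempty, hzero]
  · have hinner : ∀ i ∈ P,
        ∑ j ∈ N, (α i * |α j| / A) * (u i - u j)
          = (α i * u i) + (α i / A) * (∑ j ∈ N, α j * u j) := by
      intro i hi
      have step : ∑ j ∈ N, (α i * |α j| / A) * (u i - u j)
          = ∑ j ∈ N, ((α i * u i / A) * (-α j) + (α i / A) * (α j * u j)) := by
        refine Finset.sum_congr rfl fun j hj => ?_
        rw [habs j hj]; ring
      rw [step, Finset.sum_add_distrib, ← Finset.mul_sum, ← Finset.mul_sum]
      have : ∑ j ∈ N, -α j = A := by
        rw [Finset.sum_neg_distrib, hNsum, neg_neg]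
      rw [this]
      field_simp
    rw [Finset.sum_congr rfl hinner, Finset.sum_add_distrib, ← Finset.sum_mul]

    have : (∑ i ∈ P, α i / A) = 1 := by
      rw [← Finset.sum_div, ← hA, div_self h0]
    rw [this, one_mul, key u]
end

section
/- Let (Ω, 𝔉, P) be a probability space with a dynamical system (τ_x)_{x∈ℝ^d}, let Q ⊆ ℝ^d be a bounded convex open set with 0 ∈ Q, let 1 < p, q < ∞ with 1/p + 1/q = 1, and let f ∈ L^p(Ω;P). Let ω ∈ Ω be a point at which the conclusions of the ergodic theorem hold, namely: x ↦ f(τ_x ω) is measurable and locally p-integrable, (i) for every continuous ψ : closure(Q) → ℝ one has n^{−d} ∫_{nQ} ψ(x/n) f(τ_x ω) dx → (∫_Ω f dP) · ∫_Q ψ(x) dx as n → ∞, and (ii) sup_{n∈ℕ} n^{−d} ∫_{nQ} |f(τ_x ω)|^p dx < ∞. Then for every φ ∈ L^q(Q): n^{−d} ∫_{nQ} φ(x/n) f(τ_x ω) dx → (∫_Ω f dP) · ∫_Q φ(x) dx as n → ∞. -/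
open MeasureTheory Filter Pointwise Topology Module
open scoped ENNReal

/-!
Substituting `x = n • y` turns the `n`-th average into `∫_Q φ(y) F_n(y) dy`, the pairing of `φ`
with the rescaled realization `F_n(y) = f(τ_{n y} ω)`; by (ii) the `F_n` are bounded in `L^p(Q)`,
and the limit `(∫ f dP) ∫_Q φ` is the pairing of `φ` with a constant. By Hölder's inequality these
pairings are equicontinuous in `φ ∈ L^q(Q)`, so convergence for the continuous compactly supported
test functions, which are dense in `L^q(Q)`, extends to every `φ`.
-/

theorem Metric.tendsto_of_forall_approx {ι X : Type*} [PseudoMetricSpace X] {l : Filter ι}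
    {u : ι → X} {a : X}
    (h : ∀ ε > 0, ∃ (v : ι → X) (b : X), Tendsto v l (𝓝 b) ∧
      (∀ᶠ i in l, dist (u i) (v i) ≤ ε) ∧ dist a b ≤ ε) :
    Tendsto u l (𝓝 a) := by
  refine Metric.tendsto_nhds.mpr fun ε hε => ?_
  obtain ⟨v, b, hvb, huv, hab⟩ := h (ε / 3) (by positivity)
  filter_upwards [huv, Metric.tendsto_nhds.mp hvb (ε / 3) (by positivity)] with i hui hvi
  have := dist_triangle4 (u i) (v i) b a
  rw [dist_comm b a] at this
  linarith

theorem MeasureTheory.IntegrableOn.of_isBounded {X F : Type*} [SeminormedAddCommGroup X]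
    [MeasurableSpace X] [NormedAddCommGroup F] {μ : Measure X} {g : X → F}
    (hg : ∀ R > 0, IntegrableOn g (Metric.ball 0 R) μ) {s : Set X} (hs : Bornology.IsBounded s) :
    IntegrableOn g s μ := by
  obtain ⟨r, hr⟩ := hs.subset_ball 0
  exact (hg (max r 1) (by positivity)).mono_set
    (hr.trans (Metric.ball_subset_ball (le_max_left _ _)))

section Scaling

variable {E F : Type*} [NormedAddCommGroup E] [NormedSpace ℝ E] [MeasurableSpace E] [BorelSpace E]
  [FiniteDimensional ℝ E] {μ : Measure E} [μ.IsAddHaarMeasure]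

theorem MeasureTheory.IntegrableOn.comp_smul [NormedAddCommGroup F] {g : E → F} {s : Set E}
    {R : ℝ} (hg : IntegrableOn g (R • s) μ) (hR : R ≠ 0) :
    IntegrableOn (fun x => g (R • x)) s μ := by
  let e : E ≃ᵐ E := (Homeomorph.smulOfNeZero R hR).toMeasurableEquiv
  have he : e ⁻¹' (R • s) = s := by
    rw [show ⇑e = (R • ·) from rfl, Set.preimage_smul₀ hR, inv_smul_smul₀ hR]
  refine (integrable_map_equiv e g).mp ?_
  rw [← he, ← MeasurableEquiv.restrict_map]
  change Integrable g ((Measure.map (fun x => R • x) μ).restrict (R • s))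
  rw [Measure.map_addHaar_smul μ hR, Measure.restrict_smul]
  exact hg.smul_measure ENNReal.ofReal_ne_top

theorem memLp_restrict_comp_smul {g : E → ℝ} (hg : Measurable g) {s : Set E} {R p : ℝ}
    (hR : R ≠ 0) (hp : 0 < p) (hint : IntegrableOn (fun x => |g x| ^ p) (R • s) μ) :
    MemLp (fun y => g (R • y)) (ENNReal.ofReal p) (μ.restrict s) :=
  (integrable_norm_rpow_iff (hg.comp (measurable_const_smul R)).aestronglyMeasurable
    (by simpa using hp) ENNReal.ofReal_ne_top).mp
    (by simpa only [ENNReal.toReal_ofReal hp.le, Real.norm_eq_abs, Function.comp_apply] using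
      (hint.comp_smul hR).integrable)

theorem EuclideanSpace.setIntegral_comp_smul_of_pos {d : ℕ} (g : EuclideanSpace ℝ (Fin d) → ℝ)
    (s : Set (EuclideanSpace ℝ (Fin d))) {R : ℝ} (hR : 0 < R) :
    ∫ y in s, g (R • y) = R ^ (-(d : ℝ)) * ∫ x in R • s, g x := by
  rw [Measure.setIntegral_comp_smul_of_pos _ g s hR, finrank_euclideanSpace_fin, smul_eq_mul,
    Real.rpow_neg hR.le, Real.rpow_natCast]

theorem EuclideanSpace.setIntegral_mul_comp_smul_of_pos {d : ℕ}
    (ψ g : EuclideanSpace ℝ (Fin d) → ℝ) (s : Set (EuclideanSpace ℝ (Fin d))) {R : ℝ}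
    (hR : 0 < R) :
    ∫ y in s, ψ y * g (R • y) = R ^ (-(d : ℝ)) * ∫ x in R • s, ψ (R⁻¹ • x) * g x := by
  simpa only [inv_smul_smul₀ hR.ne'] using
    EuclideanSpace.setIntegral_comp_smul_of_pos (fun x => ψ (R⁻¹ • x) * g x) s hR

end Scaling

section Holder

variable {α : Type*} [MeasurableSpace α] {μ : Measure α} {p q : ℝ}

theorem abs_integral_mul_le_Lp_mul_Lq (hpq : p.HolderConjugate q) {u v : α → ℝ}
    (hu : MemLp u (ENNReal.ofReal q) μ) (hv : MemLp v (ENNReal.ofReal p) μ) :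
    |∫ x, u x * v x ∂μ| ≤ (∫ x, |u x| ^ q ∂μ) ^ (1 / q) * (∫ x, |v x| ^ p ∂μ) ^ (1 / p) := by
  have h := integral_mul_norm_le_Lp_mul_Lq hpq.symm hu hv
  simp only [Real.norm_eq_abs, ← abs_mul] at h
  exact abs_integral_le_integral_abs.trans h

theorem abs_integral_mul_sub_integral_mul_le (hpq : p.HolderConjugate q)
    {u w v : α → ℝ} (hu : MemLp u (ENNReal.ofReal q) μ) (hw : MemLp w (ENNReal.ofReal q) μ)
    (hv : MemLp v (ENNReal.ofReal p) μ) :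
    |∫ x, u x * v x ∂μ - ∫ x, w x * v x ∂μ|
      ≤ (∫ x, |u x - w x| ^ q ∂μ) ^ (1 / q) * (∫ x, |v x| ^ p ∂μ) ^ (1 / p) := by
  have := hpq.symm.ennrealOfReal
  have huv : Integrable (fun x => u x * v x) μ := hu.integrable_mul hv
  have hwv : Integrable (fun x => w x * v x) μ := hw.integrable_mul hv
  rw [← integral_sub huv hwv]
  simpa only [Pi.sub_apply, sub_mul] using abs_integral_mul_le_Lp_mul_Lq hpq (hu.sub hw) hv

theorem MeasureTheory.MemLp.exists_continuous_integral_abs_sub_rpow_le [TopologicalSpace α]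
    [NormalSpace α] [R1Space α] [BorelSpace α] [WeaklyLocallyCompactSpace α] [μ.Regular]
    (hq : 0 < q) {φ : α → ℝ} (hφ : MemLp φ (ENNReal.ofReal q) μ) {δ : ℝ} (hδ : 0 < δ) :
    ∃ g : α → ℝ, Continuous g ∧ MemLp g (ENNReal.ofReal q) μ ∧
      (∫ x, |φ x - g x| ^ q ∂μ) ^ (1 / q) ≤ δ := by
  obtain ⟨g, -, hφg, hg, hgq⟩ := hφ.exists_hasCompactSupport_eLpNorm_sub_le
    ENNReal.ofReal_ne_top (ENNReal.ofReal_pos.mpr hδ).ne'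
  refine ⟨g, hg, hgq, ?_⟩
  rw [(hφ.sub hgq).eLpNorm_eq_integral_rpow_norm (by simpa using hq) ENNReal.ofReal_ne_top,
    ENNReal.ofReal_le_ofReal_iff hδ.le, ENNReal.toReal_ofReal hq.le] at hφg
  simpa [Real.norm_eq_abs, one_div] using hφg

theorem tendsto_integral_mul_of_forall_approx {ι : Type*} {l : Filter ι}
    (hpq : p.HolderConjugate q) {F : ι → α → ℝ} {G φ : α → ℝ} {K : ℝ}
    (hF : ∀ᶠ i in l, MemLp (F i) (ENNReal.ofReal p) μ ∧ (∫ x, |F i x| ^ p ∂μ) ^ (1 / p) ≤ K)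
    (hG : MemLp G (ENNReal.ofReal p) μ) (hGK : (∫ x, |G x| ^ p ∂μ) ^ (1 / p) ≤ K)
    (hφ : MemLp φ (ENNReal.ofReal q) μ)
    (happrox : ∀ δ > 0, ∃ g : α → ℝ, MemLp g (ENNReal.ofReal q) μ ∧
      (∫ x, |φ x - g x| ^ q ∂μ) ^ (1 / q) ≤ δ ∧
      Tendsto (fun i => ∫ x, g x * F i x ∂μ) l (𝓝 (∫ x, g x * G x ∂μ))) :
    Tendsto (fun i => ∫ x, φ x * F i x ∂μ) l (𝓝 (∫ x, φ x * G x ∂μ)) := by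
  have hK : 0 ≤ K := (Real.rpow_nonneg (integral_nonneg fun _ => by positivity) _).trans hGK
  refine Metric.tendsto_of_forall_approx fun ε hε => ?_
  obtain ⟨g, hg, hφg, hlim⟩ := happrox (ε / (K + 1)) (by positivity)
  have hdist : ∀ {H : α → ℝ}, MemLp H (ENNReal.ofReal p) μ →
      (∫ x, |H x| ^ p ∂μ) ^ (1 / p) ≤ K →
      dist (∫ x, φ x * H x ∂μ) (∫ x, g x * H x ∂μ) ≤ ε := fun {H} hH hHK =>
    calc _ ≤ (∫ x, |φ x - g x| ^ q ∂μ) ^ (1 / q) * (∫ x, |H x| ^ p ∂μ) ^ (1 / p) :=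
          abs_integral_mul_sub_integral_mul_le hpq hφ hg hH
      _ ≤ ε / (K + 1) * K := by gcongr
      _ ≤ ε := by rw [div_mul_eq_mul_div, div_le_iff₀ (by positivity)]; nlinarith
  exact ⟨_, _, hlim, hF.mono fun i hi => hdist hi.1 hi.2, hdist hG hGK⟩

end Holder

theorem stmt12_general (d : ℕ) {Ω : Type*} [MeasurableSpace Ω]
    (P : Measure Ω)
    (τ : EuclideanSpace ℝ (Fin d) → Ω → Ω)
    (Q : Set (EuclideanSpace ℝ (Fin d))) (hQb : Bornology.IsBounded Q)
    (p q : ℝ) (hp : 1 < p) (hpq : 1/p + 1/q = 1)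
    (f : Ω → ℝ)
    (ω : Ω)
    (hmeasω : Measurable fun x : EuclideanSpace ℝ (Fin d) => f (τ x ω))
    (hloc : ∀ R : ℝ, 0 < R →
      IntegrableOn (fun x : EuclideanSpace ℝ (Fin d) => |f (τ x ω)| ^ p) (Metric.ball 0 R))
    (hi : ∀ ψ : EuclideanSpace ℝ (Fin d) → ℝ, ContinuousOn ψ (closure Q) →
      Tendsto (fun n : ℕ => (n : ℝ) ^ (-(d : ℝ)) *
          ∫ x in (n : ℝ) • Q, ψ ((n : ℝ)⁻¹ • x) * f (τ x ω))
        atTop (nhds ((∫ ω', f ω' ∂P) * ∫ x in Q, ψ x)))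
    (hii : ∃ M : ℝ, ∀ n : ℕ,
      (n : ℝ) ^ (-(d : ℝ)) * (∫ x in (n : ℝ) • Q, |f (τ x ω)| ^ p) ≤ M) :
    ∀ φ : EuclideanSpace ℝ (Fin d) → ℝ,
      MemLp φ (ENNReal.ofReal q) (volume.restrict Q) →
      Tendsto (fun n : ℕ => (n : ℝ) ^ (-(d : ℝ)) *
          ∫ x in (n : ℝ) • Q, φ ((n : ℝ)⁻¹ • x) * f (τ x ω))
        atTop (nhds ((∫ ω', f ω' ∂P) * ∫ x in Q, φ x)) := by
  intro φ hφ
  obtain ⟨M, hM⟩ := hii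
  set I := ∫ ω', f ω' ∂P
  have hpq' : p.HolderConjugate q :=
    Real.holderConjugate_iff.mpr ⟨hp, by simpa only [one_div] using hpq⟩
  have hQfin : volume Q ≠ ∞ := hQb.measure_lt_top.ne
  have : IsFiniteMeasure (volume.restrict Q) := isFiniteMeasure_restrict.mpr hQfin
  have : (volume.restrict Q).Regular := Measure.Regular.restrict_of_measure_ne_top hQfin
  have hscale : ∀ ψ : EuclideanSpace ℝ (Fin d) → ℝ,
      (fun n : ℕ => (n : ℝ) ^ (-(d : ℝ)) * ∫ x in (n : ℝ) • Q, ψ ((n : ℝ)⁻¹ • x) * f (τ x ω))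
        =ᶠ[atTop] fun n => ∫ y in Q, ψ y * f (τ ((n : ℝ) • y) ω) :=
    fun ψ => (eventually_gt_atTop 0).mono fun n hn =>
      (EuclideanSpace.setIntegral_mul_comp_smul_of_pos ψ _ Q (Nat.cast_pos.mpr hn)).symm
  have hlimit : ∀ ψ : EuclideanSpace ℝ (Fin d) → ℝ, I * ∫ x in Q, ψ x = ∫ x in Q, ψ x * I :=
    fun ψ => by rw [integral_mul_const, mul_comm]
  have hF : ∀ᶠ n : ℕ in atTop,
      MemLp (fun y => f (τ ((n : ℝ) • y) ω)) (ENNReal.ofReal p) (volume.restrict Q) ∧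
        (∫ y in Q, |f (τ ((n : ℝ) • y) ω)| ^ p) ^ (1 / p) ≤ M ^ (1 / p) := by
    filter_upwards [eventually_gt_atTop 0] with n hn
    have hR : (0 : ℝ) < n := Nat.cast_pos.mpr hn
    refine ⟨memLp_restrict_comp_smul hmeasω hR.ne' hpq'.pos
      (IntegrableOn.of_isBounded hloc (hQb.smul₀ (n : ℝ))), ?_⟩
    refine Real.rpow_le_rpow (integral_nonneg fun _ => by positivity) ?_ (by positivity)
    rw [EuclideanSpace.setIntegral_comp_smul_of_pos (fun x => |f (τ x ω)| ^ p) Q hR]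
    exact hM n
  rw [hlimit]
  refine (tendsto_integral_mul_of_forall_approx hpq' (K := max (M ^ (1 / p)) _)
    (hF.mono fun n hn => ⟨hn.1, hn.2.trans (le_max_left _ _)⟩) (memLp_const I) (le_max_right _ _)
    hφ fun δ hδ => ?_).congr' (hscale φ).symm
  obtain ⟨g, hg, hgq, hφg⟩ := hφ.exists_continuous_integral_abs_sub_rpow_le hpq'.symm.pos hδ
  exact ⟨g, hgq, hφg, by simpa only [hlimit] using (hi g hg.continuousOn).congr' (hscale g)⟩

/-- **General ergodic theorem for the Lebesgue measure with `L^q` test functions**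
(Theorem 2.21 of the paper).  Let `Q` be a bounded convex open set containing `0`, let
`1 < p,q < ∞` be conjugate, `f ∈ L^p(Ω;P)`, and let `ω` be a point where the realization
`x ↦ f(τ_x ω)` is measurable and locally `p`-integrable, where the ergodic averages against
continuous test functions converge, and where the `p`-averages over `nQ` are bounded.  Then
for every `φ ∈ L^q(Q)`:
`n^{-d} ∫_{nQ} φ(x/n) f(τ_x ω) dx → (∫_Ω f dP) ∫_Q φ`. -/
theorem stmt12 (d : ℕ) (hd : 1 ≤ d) {Ω : Type*} [MeasurableSpace Ω]
    (P : Measure Ω) [IsProbabilityMeasure P]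
    (τ : EuclideanSpace ℝ (Fin d) → Ω → Ω)
    (hbij : ∀ x, Function.Bijective (τ x))
    (hgrp : ∀ x y ω, τ x (τ y ω) = τ (x + y) ω)
    (hzero : ∀ ω, τ 0 ω = ω)
    (hmp : ∀ x, MeasurePreserving (τ x) P P)
    (hmeas : Measurable fun q : EuclideanSpace ℝ (Fin d) × Ω => τ q.1 q.2)
    (Q : Set (EuclideanSpace ℝ (Fin d))) (hQb : Bornology.IsBounded Q)
    (hQc : Convex ℝ Q) (hQo : IsOpen Q) (hQ0 : (0 : EuclideanSpace ℝ (Fin d)) ∈ Q)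
    (p q : ℝ) (hp : 1 < p) (hq : 1 < q) (hpq : 1/p + 1/q = 1)
    (f : Ω → ℝ) (hf : MemLp f (ENNReal.ofReal p) P)
    (ω : Ω)
    (hmeasω : Measurable fun x : EuclideanSpace ℝ (Fin d) => f (τ x ω))
    (hloc : ∀ R : ℝ, 0 < R →
      IntegrableOn (fun x : EuclideanSpace ℝ (Fin d) => |f (τ x ω)| ^ p) (Metric.ball 0 R))
    (hi : ∀ ψ : EuclideanSpace ℝ (Fin d) → ℝ, ContinuousOn ψ (closure Q) →
      Tendsto (fun n : ℕ => (n : ℝ) ^ (-(d : ℝ)) *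
          ∫ x in (n : ℝ) • Q, ψ ((n : ℝ)⁻¹ • x) * f (τ x ω))
        atTop (nhds ((∫ ω', f ω' ∂P) * ∫ x in Q, ψ x)))
    (hii : ∃ M : ℝ, ∀ n : ℕ,
      (n : ℝ) ^ (-(d : ℝ)) * (∫ x in (n : ℝ) • Q, |f (τ x ω)| ^ p) ≤ M) :
    ∀ φ : EuclideanSpace ℝ (Fin d) → ℝ,
      MemLp φ (ENNReal.ofReal q) (volume.restrict Q) →
      Tendsto (fun n : ℕ => (n : ℝ) ^ (-(d : ℝ)) *
          ∫ x in (n : ℝ) • Q, φ ((n : ℝ)⁻¹ • x) * f (τ x ω))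
        atTop (nhds ((∫ ω', f ω' ∂P) * ∫ x in Q, φ x)) :=
  stmt12_general d P τ Q hQb p q hp hpq f ω hmeasω hloc hi hii
end

section
/- Let (Ω, 𝔉, P) be a probability space with a dynamical system (τ_x)_{x∈ℝ^d}, let 1 ≤ p < ∞, let f ∈ L^p(Ω;P), let i ∈ {1,…,d}, and suppose that g ∈ L^p(Ω;P) is the i-th stochastic derivative D_i f of f. Then for P-almost every ω ∈ Ω: for every continuously differentiable compactly supported ψ : ℝ^d → ℝ one has ∫_{ℝ^d} f(τ_x ω) ∂_i ψ(x) dx = − ∫_{ℝ^d} ψ(x) g(τ_x ω) dx; that is, the realization x ↦ f(τ_x ω) has the realization x ↦ g(τ_x ω) as its i-th weak partial derivative on ℝ^d. -/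
/-!
Fix a test function `ψ` and `h ≠ 0`, and let `Q_h = h⁻¹ (f ∘ τ_{h e} - f) - g` be the error of
the difference quotient. Translation invariance of Lebesgue measure moves the difference quotient
from the realization of `f` onto `ψ`:
`∫ f(τ_x ω) h⁻¹ (ψ(x - h e) - ψ(x)) dx - ∫ ψ(x) g(τ_x ω) dx = ∫ ψ(x) Q_h(τ_x ω) dx`.
As `h → 0` the first integral tends to `-∫ f(τ_x ω) ∂_e ψ(x) dx` by dominated convergence, so it
remains to make the right-hand side vanish in the limit, for a.e. `ω` and all `ψ` at once.
Since every `τ_x` preserves `P`, Tonelli gives `E ∫_K |Q_h(τ_x ω)| dx = |K| ‖Q_h‖_{L¹(P)}`.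
Choosing `h_n → 0` with `∑ ‖Q_{h_n}‖_{L¹(P)} < ∞`, the realizations of `Q_{h_n}` tend to `0` in
`L¹_loc` for a.e. `ω`; the exceptional set does not depend on `ψ`.
-/

open MeasureTheory Filter Topology ENNReal

theorem Filter.Tendsto.exists_seq_tendsto_tsum_ne_top {α : Type*} {l : Filter α}
    [l.IsCountablyGenerated] [l.NeBot] {a : α → ℝ≥0∞} (ha : Tendsto a l (𝓝 0)) :
    ∃ t : ℕ → α, Tendsto t atTop l ∧ ∑' n, a (t n) ≠ ∞ := by
  obtain ⟨s, hs⟩ := l.exists_antitone_basis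
  have hex n : ∃ x ∈ s n, a x < 2⁻¹ ^ n :=
    ((eventually_mem_set.mpr (hs.mem n)).and
      (ha.eventually_lt_const (ENNReal.pow_pos (by norm_num) n))).exists
  choose t hts hta using hex
  refine ⟨t, hs.tendsto hts, ne_top_of_le_ne_top ?_ (ENNReal.tsum_le_tsum fun n => (hta n).le)⟩
  simp [ENNReal.tsum_geometric]

theorem ae_forall_isCompact_of_antitone {Ω X : Type*} [MeasurableSpace Ω] {P : Measure Ω}
    [TopologicalSpace X] [WeaklyLocallyCompactSpace X] [SigmaCompactSpace X]
    {p : Ω → Set X → Prop} (hp : ∀ ω K L, K ⊆ L → p ω L → p ω K)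
    (h : ∀ K, IsCompact K → ∀ᵐ ω ∂P, p ω K) :
    ∀ᵐ ω ∂P, ∀ K, IsCompact K → p ω K := by
  let L := CompactExhaustion.choice X
  filter_upwards [ae_all_iff.mpr fun n => h (L n) (L.isCompact n)] with ω hω K hK
  obtain ⟨n, hn⟩ := L.exists_superset_of_isCompact hK
  exact hp ω K (L n) hn (hω n)

section Realizations

variable {Ω E : Type*} [MeasurableSpace Ω] [MeasurableSpace E] {P : Measure Ω} {ν : Measure E}
  {τ : E → Ω → Ω}

theorem lintegral_lintegral_comp_of_measurePreserving [SFinite P] [SFinite ν]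
    (hmp : ∀ x, MeasurePreserving (τ x) P P) (hmeas : Measurable fun q : E × Ω => τ q.1 q.2)
    {G : Ω → ℝ≥0∞} (hG : Measurable G) :
    ∫⁻ ω, ∫⁻ x, G (τ x ω) ∂ν ∂P = ν Set.univ * ∫⁻ ω, G ω ∂P := by
  rw [lintegral_lintegral_swap (f := fun ω x => G (τ x ω))
    ((hG.comp hmeas).comp measurable_swap).aemeasurable]
  simp_rw [(hmp _).lintegral_comp hG, lintegral_const, mul_comm]

theorem ae_integrable_comp_of_measurePreserving [SFinite P] [IsFiniteMeasure ν]
    (hmp : ∀ x, MeasurePreserving (τ x) P P) (hmeas : Measurable fun q : E × Ω => τ q.1 q.2)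
    {F : Ω → ℝ} (hFm : Measurable F) (hFi : Integrable F P) :
    ∀ᵐ ω ∂P, Integrable (fun x => F (τ x ω)) ν := by
  have hfin : ∫⁻ ω, ∫⁻ x, ‖F (τ x ω)‖ₑ ∂ν ∂P ≠ ∞ := by
    rw [lintegral_lintegral_comp_of_measurePreserving hmp hmeas hFm.enorm]
    exact mul_ne_top (measure_ne_top ν _) hFi.2.ne
  filter_upwards [ae_lt_top (hFm.comp hmeas).enorm.lintegral_prod_left' hfin] with ω hω
  exact ⟨(hFm.comp (hmeas.comp measurable_prodMk_right)).aestronglyMeasurable, hω⟩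

theorem ae_ae_eq_comp_of_measurePreserving [SFinite P] [SFinite ν]
    (hmp : ∀ x, MeasurePreserving (τ x) P P) (hmeas : Measurable fun q : E × Ω => τ q.1 q.2)
    {F F' : Ω → ℝ} (hF : F =ᵐ[P] F') :
    ∀ᵐ ω ∂P, (fun x => F (τ x ω)) =ᵐ[ν] fun x => F' (τ x ω) := by
  obtain ⟨N, hFN, hNm, hN⟩ := exists_measurable_superset_of_null (ae_iff.mp hF)
  have hind : Measurable (N.indicator (1 : Ω → ℝ≥0∞)) := measurable_one.indicator hNm
  have hzero : ∫⁻ ω, ∫⁻ x, N.indicator 1 (τ x ω) ∂ν ∂P = 0 := by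
    rw [lintegral_lintegral_comp_of_measurePreserving hmp hmeas hind, lintegral_indicator_one hNm,
      hN, mul_zero]
  have hinner := (hind.comp hmeas).lintegral_prod_left' (μ := ν)
  filter_upwards [(lintegral_eq_zero_iff hinner).mp hzero] with ω hω
  filter_upwards [(lintegral_eq_zero_iff (hind.comp (hmeas.comp measurable_prodMk_right))).mp hω]
    with x hx
  by_contra hne
  simp [Set.indicator_of_mem (hFN hne)] at hx

theorem ae_tendsto_lintegral_comp_of_tsum_ne_top [SFinite P] [IsFiniteMeasure ν]
    (hmp : ∀ x, MeasurePreserving (τ x) P P) (hmeas : Measurable fun q : E × Ω => τ q.1 q.2)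
    {F : ℕ → Ω → ℝ} (hFm : ∀ n, Measurable (F n)) (hF : ∑' n, eLpNorm (F n) 1 P ≠ ∞) :
    ∀ᵐ ω ∂P, Tendsto (fun n => ∫⁻ x, ‖F n (τ x ω)‖ₑ ∂ν) atTop (𝓝 0) := by
  have hinner n : Measurable fun ω => ∫⁻ x, ‖F n (τ x ω)‖ₑ ∂ν :=
    ((hFm n).comp hmeas).enorm.lintegral_prod_left'
  have hfin : ∫⁻ ω, ∑' n, ∫⁻ x, ‖F n (τ x ω)‖ₑ ∂ν ∂P ≠ ∞ := by
    rw [lintegral_tsum fun n => (hinner n).aemeasurable]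
    simp_rw [lintegral_lintegral_comp_of_measurePreserving hmp hmeas (hFm _).enorm,
      ENNReal.tsum_mul_left, ← eLpNorm_one_eq_lintegral_enorm]
    exact mul_ne_top (measure_ne_top ν _) hF
  filter_upwards [ae_lt_top (Measurable.tsum hinner) hfin] with ω hω
  exact ENNReal.tendsto_atTop_zero_of_tsum_ne_top hω.ne

theorem ae_locallyIntegrable_comp_of_measurePreserving [TopologicalSpace E]
    [LocallyCompactSpace E] [SigmaCompactSpace E] [SFinite P] {μ : Measure E}
    [IsFiniteMeasureOnCompacts μ] (hmp : ∀ x, MeasurePreserving (τ x) P P)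
    (hmeas : Measurable fun q : E × Ω => τ q.1 q.2) {F : Ω → ℝ} (hFm : Measurable F)
    (hFi : Integrable F P) :
    ∀ᵐ ω ∂P, LocallyIntegrable (fun x => F (τ x ω)) μ := by
  simp_rw [locallyIntegrable_iff]
  refine ae_forall_isCompact_of_antitone (fun ω K L hKL h => h.mono_set hKL) fun K hK => ?_
  have := isFiniteMeasure_restrict.mpr (hK.measure_lt_top (μ := μ)).ne
  exact ae_integrable_comp_of_measurePreserving hmp hmeas hFm hFi

theorem ae_tendsto_setLIntegral_comp_of_tsum_ne_top [TopologicalSpace E]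
    [WeaklyLocallyCompactSpace E] [SigmaCompactSpace E] [SFinite P] {μ : Measure E}
    [IsFiniteMeasureOnCompacts μ] (hmp : ∀ x, MeasurePreserving (τ x) P P)
    (hmeas : Measurable fun q : E × Ω => τ q.1 q.2) {F : ℕ → Ω → ℝ}
    (hFm : ∀ n, Measurable (F n)) (hF : ∑' n, eLpNorm (F n) 1 P ≠ ∞) :
    ∀ᵐ ω ∂P, ∀ K, IsCompact K →
      Tendsto (fun n => ∫⁻ x in K, ‖F n (τ x ω)‖ₑ ∂μ) atTop (𝓝 0) := by
  refine ae_forall_isCompact_of_antitone (fun ω K L hKL h =>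
    tendsto_of_tendsto_of_tendsto_of_le_of_le tendsto_const_nhds h (fun _ => zero_le)
      fun n => lintegral_mono_set hKL) fun K hK => ?_
  have := isFiniteMeasure_restrict.mpr (hK.measure_lt_top (μ := μ)).ne
  exact ae_tendsto_lintegral_comp_of_tsum_ne_top hmp hmeas hFm hF

end Realizations

section WeakDerivative

variable {E : Type*} [NormedAddCommGroup E] [MeasurableSpace E] {μ : Measure E}

theorem integral_mul_slope_sub_eq [BorelSpace E] [μ.IsAddRightInvariant] {u v ψ : E → ℝ}
    (hu : LocallyIntegrable u μ) (hv : LocallyIntegrable v μ) (hψ : Continuous ψ)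
    (hcs : HasCompactSupport ψ) (a : ℝ) (c : E) :
    ∫ x, u x * (a * (ψ (x - c) - ψ x)) ∂μ - ∫ x, ψ x * v x ∂μ =
      ∫ x, ψ x * (a * (u (x + c) - u x) - v x) ∂μ := by
  have h₁ : Integrable (fun x => u x * ψ (x - c)) μ :=
    hu.integrable_smul_right_of_hasCompactSupport (by fun_prop)
      (hcs.comp_homeomorph (Homeomorph.subRight c))
  have h₂ : Integrable (fun x => u x * ψ x) μ :=
    hu.integrable_smul_right_of_hasCompactSupport hψ hcs
  have h₃ : Integrable (fun x => ψ x * u (x + c)) μ := by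
    simpa [mul_comm] using h₁.comp_add_right c
  have h₄ : Integrable (fun x => ψ x * v x) μ :=
    hv.integrable_smul_left_of_hasCompactSupport hψ hcs
  have htranslate : ∫ x, ψ x * u (x + c) ∂μ = ∫ x, u x * ψ (x - c) ∂μ := by
    rw [← integral_add_right_eq_self (fun x => u x * ψ (x - c)) c]
    simp [mul_comm]
  have hlhs : ∫ x, u x * (a * (ψ (x - c) - ψ x)) ∂μ =
      a * ∫ x, u x * ψ (x - c) ∂μ - a * ∫ x, u x * ψ x ∂μ := by
    rw [← integral_const_mul, ← integral_const_mul,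
      ← integral_sub (h₁.const_mul a) (h₂.const_mul a)]
    congr 1; ext x; ring
  have hrhs : ∫ x, ψ x * (a * (u (x + c) - u x) - v x) ∂μ =
      a * ∫ x, ψ x * u (x + c) ∂μ - a * ∫ x, u x * ψ x ∂μ - ∫ x, ψ x * v x ∂μ := by
    have h₅ : Integrable (fun x => a * (ψ x * u (x + c)) - a * (u x * ψ x)) μ :=
      (h₃.const_mul a).sub (h₂.const_mul a)
    rw [← integral_const_mul, ← integral_const_mul,
      ← integral_sub (h₃.const_mul a) (h₂.const_mul a), ← integral_sub h₅ h₄]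
    congr 1; ext x; ring
  rw [hlhs, hrhs, htranslate]

theorem tendsto_integral_mul_of_tendsto_setLIntegral {ι : Type*} {l : Filter ι} {ψ : E → ℝ}
    {w : ι → E → ℝ} (hψ : Continuous ψ) (hcs : HasCompactSupport ψ)
    (hw : Tendsto (fun n => ∫⁻ x in tsupport ψ, ‖w n x‖ₑ ∂μ) l (𝓝 0)) :
    Tendsto (fun n => ∫ x, ψ x * w n x ∂μ) l (𝓝 0) := by
  obtain ⟨C, hC⟩ := hψ.bounded_above_of_compact_support hcs
  have hbound : ∀ n, ‖∫ x, ψ x * w n x ∂μ‖ₑ ≤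
      ENNReal.ofReal C * ∫⁻ x in tsupport ψ, ‖w n x‖ₑ ∂μ := by
    intro n
    calc ‖∫ x, ψ x * w n x ∂μ‖ₑ ≤ ∫⁻ x, ‖ψ x * w n x‖ₑ ∂μ := enorm_integral_le_lintegral_enorm _
      _ = ∫⁻ x in tsupport ψ, ‖ψ x * w n x‖ₑ ∂μ :=
        (setLIntegral_eq_of_support_subset fun x hx =>
          subset_tsupport ψ fun h0 => hx (by simp [h0])).symm
      _ ≤ ∫⁻ x in tsupport ψ, ENNReal.ofReal C * ‖w n x‖ₑ ∂μ := by
        refine lintegral_mono fun x => ?_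
        rw [enorm_mul, ← ofReal_norm (ψ x)]
        gcongr
        exact hC x
      _ = ENNReal.ofReal C * ∫⁻ x in tsupport ψ, ‖w n x‖ₑ ∂μ :=
        lintegral_const_mul' _ _ ofReal_ne_top
  refine tendsto_zero_iff_enorm_tendsto_zero.mpr <|
    tendsto_of_tendsto_of_tendsto_of_le_of_le tendsto_const_nhds ?_ (fun _ => zero_le) hbound
  simpa using ENNReal.Tendsto.const_mul hw (Or.inr ofReal_ne_top)

variable [NormedSpace ℝ E]

def HasWeakLineDeriv (μ : Measure E) (u v : E → ℝ) (e : E) : Prop :=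
  ∀ ψ : E → ℝ, ContDiff ℝ 1 ψ → HasCompactSupport ψ →
    ∫ x, u x * fderiv ℝ ψ x e ∂μ = -∫ x, ψ x * v x ∂μ

theorem HasWeakLineDeriv.congr_ae {u u' v v' : E → ℝ} {e : E} (h : HasWeakLineDeriv μ u v e)
    (hu : u =ᵐ[μ] u') (hv : v =ᵐ[μ] v') : HasWeakLineDeriv μ u' v' e := by
  intro ψ hψ hcs
  have hu' : ∫ x, u' x * fderiv ℝ ψ x e ∂μ = ∫ x, u x * fderiv ℝ ψ x e ∂μ :=
    integral_congr_ae (by filter_upwards [hu] with x hx; rw [hx])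
  have hv' : ∫ x, ψ x * v' x ∂μ = ∫ x, ψ x * v x ∂μ :=
    integral_congr_ae (by filter_upwards [hv] with x hx; rw [hx])
  rw [hu', hv', h ψ hψ hcs]

theorem tendsto_integral_mul_slope [BorelSpace E] [ProperSpace E] {u ψ : E → ℝ}
    (hu : LocallyIntegrable u μ) (hψ : ContDiff ℝ 1 ψ) (hcs : HasCompactSupport ψ) (e : E) :
    Tendsto (fun h : ℝ => ∫ x, u x * (h⁻¹ * (ψ (x + h • e) - ψ x)) ∂μ) (𝓝[≠] 0)
      (𝓝 (∫ x, u x * fderiv ℝ ψ x e ∂μ)) := by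
  obtain ⟨L, hL⟩ := hψ.lipschitzWith_of_hasCompactSupport hcs one_ne_zero
  set K := Metric.cthickening ‖e‖ (tsupport ψ)
  have hK : IsCompact K := hcs.isCompact.cthickening
  have hvanish : ∀ h : ℝ, ‖h‖ ≤ 1 → ∀ x ∉ K, ψ (x + h • e) - ψ x = 0 := by
    intro h hh x hx
    have hx₀ : x ∉ tsupport ψ := fun hx' => hx (Metric.self_subset_cthickening _ hx')
    have hxe : x + h • e ∉ tsupport ψ := fun hx' => hx <|
      Metric.mem_cthickening_of_dist_le _ _ _ _ hx' <| by
        simpa [dist_eq_norm, norm_smul] using mul_le_of_le_one_left (norm_nonneg e) hh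
    rw [image_eq_zero_of_notMem_tsupport hx₀, image_eq_zero_of_notMem_tsupport hxe, sub_zero]
  have hbound : ∀ h : ℝ, h ≠ 0 → ‖h‖ ≤ 1 → ∀ x,
      ‖u x * (h⁻¹ * (ψ (x + h • e) - ψ x))‖ ≤ K.indicator (fun x => ‖u x‖ * (L * ‖e‖)) x := by
    intro h h0 hh x
    by_cases hx : x ∈ K
    · rw [Set.indicator_of_mem hx, norm_mul, norm_mul, norm_inv]
      refine mul_le_mul_of_nonneg_left ?_ (norm_nonneg _)
      rw [inv_mul_le_iff₀ (norm_pos_iff.mpr h0)]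
      have := hL.dist_le_mul (x + h • e) x
      rw [dist_eq_norm, dist_eq_norm, add_sub_cancel_left, norm_smul] at this
      linarith
    · rw [Set.indicator_of_notMem hx, hvanish h hh x hx]
      simp
  refine tendsto_integral_filter_of_dominated_convergence
    (K.indicator fun x => ‖u x‖ * (L * ‖e‖)) ?_ ?_ ?_ ?_
  · exact Eventually.of_forall fun h => hu.aestronglyMeasurable.mul
      (by fun_prop : Continuous fun x => h⁻¹ * (ψ (x + h • e) - ψ x)).aestronglyMeasurable
  · have hsmall : ∀ᶠ h : ℝ in 𝓝[≠] 0, ‖h‖ ≤ 1 := nhdsWithin_le_nhds <| by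
      filter_upwards [Metric.closedBall_mem_nhds (0 : ℝ) one_pos] with h hh
      simpa using hh
    filter_upwards [self_mem_nhdsWithin, hsmall] with h h0 hh
    exact ae_of_all _ (hbound h h0 hh)
  · exact IntegrableOn.integrable_indicator ((hu.integrableOn_isCompact hK).norm.mul_const _)
      hK.measurableSet
  · refine ae_of_all _ fun x => ?_
    have hd := (hψ.differentiable one_ne_zero x).hasFDerivAt.hasLineDerivAt e
    simpa using (hasDerivAt_iff_tendsto_slope_zero.mp hd).const_mul (u x)

end WeakDerivative

section StochasticDerivative

variable {Ω E : Type*} [MeasurableSpace Ω] [NormedAddCommGroup E] [NormedSpace ℝ E]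
  {P : Measure Ω} {τ : E → Ω → Ω} {f g : Ω → ℝ} {e : E}

def HasStochasticLineDeriv (τ : E → Ω → Ω) (P : Measure Ω) (p : ℝ≥0∞) (f g : Ω → ℝ) (e : E) :
    Prop :=
  Tendsto (fun h : ℝ => eLpNorm (fun ω => h⁻¹ * (f (τ (h • e) ω) - f ω) - g ω) p P) (𝓝[≠] 0)
    (𝓝 0)

theorem HasStochasticLineDeriv.congr_ae {p : ℝ≥0∞} {f' g' : Ω → ℝ}
    (hmp : ∀ x, MeasurePreserving (τ x) P P) (hD : HasStochasticLineDeriv τ P p f g e)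
    (hf : f =ᵐ[P] f') (hg : g =ᵐ[P] g') : HasStochasticLineDeriv τ P p f' g' e := by
  refine hD.congr fun h => eLpNorm_congr_ae ?_
  filter_upwards [(hmp (h • e)).quasiMeasurePreserving.ae_eq hf, hf, hg] with ω h₁ h₂ h₃
  simp only [Function.comp_apply] at h₁
  rw [h₁, h₂, h₃]

theorem HasStochasticLineDeriv.mono_exponent [IsProbabilityMeasure P] {p q : ℝ≥0∞}
    (hmp : ∀ x, MeasurePreserving (τ x) P P) (hD : HasStochasticLineDeriv τ P q f g e)
    (hpq : p ≤ q) (hf : AEStronglyMeasurable f P) (hg : AEStronglyMeasurable g P) :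
    HasStochasticLineDeriv τ P p f g e :=
  tendsto_of_tendsto_of_tendsto_of_le_of_le tendsto_const_nhds hD (fun _ => zero_le) fun _ =>
    eLpNorm_le_eLpNorm_of_exponent_le hpq
      ((((hf.comp_measurePreserving (hmp _)).sub hf).const_mul _).sub hg)

theorem HasStochasticLineDeriv.ae_hasWeakLineDeriv [MeasurableSpace E] [BorelSpace E]
    [ProperSpace E] [SFinite P] (μ : Measure E) [IsFiniteMeasureOnCompacts μ]
    [μ.IsAddRightInvariant]
    (hgrp : ∀ x y ω, τ x (τ y ω) = τ (x + y) ω) (hmp : ∀ x, MeasurePreserving (τ x) P P)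
    (hmeas : Measurable fun q : E × Ω => τ q.1 q.2) (hfm : Measurable f) (hgm : Measurable g)
    (hfi : Integrable f P) (hgi : Integrable g P) (hD : HasStochasticLineDeriv τ P 1 f g e) :
    ∀ᵐ ω ∂P, HasWeakLineDeriv μ (fun x => f (τ x ω)) (fun x => g (τ x ω)) e := by
  set Q : ℝ → Ω → ℝ := fun h ω => h⁻¹ * (f (τ (h • e) ω) - f ω) - g ω
  have hQm : ∀ h, Measurable (Q h) := fun h =>
    (((hfm.comp (hmeas.comp measurable_prodMk_left)).sub hfm).const_mul _).sub hgm
  obtain ⟨t, ht, hsum⟩ := Tendsto.exists_seq_tendsto_tsum_ne_top hD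
  filter_upwards [ae_locallyIntegrable_comp_of_measurePreserving (μ := μ) hmp hmeas hfm hfi,
    ae_locallyIntegrable_comp_of_measurePreserving (μ := μ) hmp hmeas hgm hgi,
    ae_tendsto_setLIntegral_comp_of_tsum_ne_top (μ := μ) hmp hmeas (fun n => hQm (t n)) hsum]
    with ω hu hv hQ ψ hψ hcs
  have hIBP : ∀ n, ∫ x, f (τ x ω) * ((t n)⁻¹ * (ψ (x - t n • e) - ψ x)) ∂μ -
      ∫ x, ψ x * g (τ x ω) ∂μ = ∫ x, ψ x * Q (t n) (τ x ω) ∂μ := by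
    intro n
    rw [integral_mul_slope_sub_eq hu hv hψ.continuous hcs]
    simp only [Q, hgrp, add_comm]
  have hslope := (tendsto_integral_mul_slope hu hψ hcs (-e)).comp ht
  simp only [Function.comp_def, smul_neg, ← sub_eq_add_neg, map_neg, mul_neg, integral_neg]
    at hslope
  have herr := tendsto_integral_mul_of_tendsto_setLIntegral hψ.continuous hcs (hQ _ hcs.isCompact)
  have := tendsto_nhds_unique (hslope.sub_const _) (herr.congr fun n => (hIBP n).symm)
  linarith

end StochasticDerivative

theorem stmt14_general (d : ℕ) {Ω : Type*} [MeasurableSpace Ω]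
    (P : Measure Ω) [IsProbabilityMeasure P]
    (τ : EuclideanSpace ℝ (Fin d) → Ω → Ω)
    (hgrp : ∀ x y ω, τ x (τ y ω) = τ (x + y) ω)
    (hmp : ∀ x, MeasurePreserving (τ x) P P)
    (hmeas : Measurable fun q : EuclideanSpace ℝ (Fin d) × Ω => τ q.1 q.2)
    (p : ℝ) (hp : 1 ≤ p)
    (f g : Ω → ℝ)
    (hf : MemLp f (ENNReal.ofReal p) P) (hg : MemLp g (ENNReal.ofReal p) P)
    (i : Fin d)
    (hD : Tendsto (fun h : ℝ =>
        eLpNorm (fun ω => h⁻¹ * (f (τ (EuclideanSpace.single i h) ω) - f ω) - g ω)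
          (ENNReal.ofReal p) P)
      (nhdsWithin (0:ℝ) {(0:ℝ)}ᶜ) (nhds 0)) :
    ∀ᵐ ω ∂P, ∀ ψ : EuclideanSpace ℝ (Fin d) → ℝ,
      ContDiff ℝ 1 ψ → HasCompactSupport ψ →
      ∫ x, f (τ x ω) * fderiv ℝ ψ x (EuclideanSpace.single i 1) =
        - ∫ x, ψ x * g (τ x ω) := by
  have hp₁ : 1 ≤ ENNReal.ofReal p := ENNReal.one_le_ofReal.mpr hp
  have hDp : HasStochasticLineDeriv τ P (ENNReal.ofReal p) f g (EuclideanSpace.single i 1) := by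
    have hsingle (h : ℝ) : EuclideanSpace.single i h = h • EuclideanSpace.single i (1 : ℝ) := by
      ext j; simp
    simpa only [HasStochasticLineDeriv, ← hsingle] using hD
  have hD₁ := (hDp.mono_exponent hmp hp₁ hf.1 hg.1).congr_ae hmp hf.1.ae_eq_mk hg.1.ae_eq_mk
  filter_upwards [hD₁.ae_hasWeakLineDeriv volume hgrp hmp hmeas
      hf.1.stronglyMeasurable_mk.measurable hg.1.stronglyMeasurable_mk.measurable
      ((hf.integrable hp₁).congr hf.1.ae_eq_mk) ((hg.integrable hp₁).congr hg.1.ae_eq_mk),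
    ae_ae_eq_comp_of_measurePreserving (ν := volume) hmp hmeas hf.1.ae_eq_mk,
    ae_ae_eq_comp_of_measurePreserving (ν := volume) hmp hmeas hg.1.ae_eq_mk]
    with ω hω hfω hgω
  exact hω.congr_ae hfω.symm hgω.symm

/-- **Realizations of stochastic Sobolev functions have the expected weak derivatives**
(Section 9.1 of the paper).  If `f ∈ L^p(Ω;P)` has `i`-th stochastic derivative
`g ∈ L^p(Ω;P)` (the difference quotients along `e_i` converge to `g` in `L^p`), then for
`P`-a.e. `ω` and every `ψ ∈ C¹_c(ℝ^d)`:
`∫ f(τ_x ω) ∂_i ψ(x) dx = − ∫ ψ(x) g(τ_x ω) dx`. -/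
theorem stmt14 (d : ℕ) {Ω : Type*} [MeasurableSpace Ω]
    (P : Measure Ω) [IsProbabilityMeasure P]
    (τ : EuclideanSpace ℝ (Fin d) → Ω → Ω)
    (hbij : ∀ x, Function.Bijective (τ x))
    (hgrp : ∀ x y ω, τ x (τ y ω) = τ (x + y) ω)
    (hzero : ∀ ω, τ 0 ω = ω)
    (hmp : ∀ x, MeasurePreserving (τ x) P P)
    (hmeas : Measurable fun q : EuclideanSpace ℝ (Fin d) × Ω => τ q.1 q.2)
    (p : ℝ) (hp : 1 ≤ p)
    (f g : Ω → ℝ)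
    (hf : MemLp f (ENNReal.ofReal p) P) (hg : MemLp g (ENNReal.ofReal p) P)
    (i : Fin d)
    (hD : Tendsto (fun h : ℝ =>
        eLpNorm (fun ω => h⁻¹ * (f (τ (EuclideanSpace.single i h) ω) - f ω) - g ω)
          (ENNReal.ofReal p) P)
      (nhdsWithin (0:ℝ) {(0:ℝ)}ᶜ) (nhds 0)) :
    ∀ᵐ ω ∂P, ∀ ψ : EuclideanSpace ℝ (Fin d) → ℝ,
      ContDiff ℝ 1 ψ → HasCompactSupport ψ →
      ∫ x, f (τ x ω) * fderiv ℝ ψ x (EuclideanSpace.single i 1) =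
        - ∫ x, ψ x * g (τ x ω) :=
  stmt14_general d P τ hgrp hmp hmeas p hp f g hf hg i hD
end

section
/- Let Γ ⊆ ℝ^d be a closed set, let r̄ > 0, let η : Γ → ℝ be continuous with 0 < η(p) ≤ r̄ for all p ∈ Γ, and let g : Γ → [0,∞) be upper semicontinuous. Define G : ℝ^d → ℝ by G(x) := sup{ g(p) : p ∈ Γ, |x − p| ≤ η(p) }, with G(x) := 0 when the indexing set is empty. Then G is everywhere finite (the supremum is attained whenever the indexing set is nonempty) and G is upper semicontinuous on ℝ^d. -/
/-!
A centre `p` with `x ∈ closedBall p (η p)` lies in the compact set `Γ ∩ closedBall x r̄`, where the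
upper semicontinuous `g` attains its maximum. For `y > 0` the superlevel set `{G ≥ y}` is therefore
the union of the balls `closedBall p (η p)` over the closed set `{p ∈ Γ | y ≤ g p}`. In a proper
space such a union of closed balls with continuous, bounded radii is closed: its trace on a compact
set `K` is the projection of a compact set of pairs `(x, p)` with `p` within `r̄` of `K`.
-/

open Set Metric

variable {X : Type*} [MetricSpace X] [ProperSpace X]

theorem isClosed_biUnion_closedBall {T : Set X} (hT : IsClosed T) {ρ : X → ℝ}
    (hρ : ContinuousOn ρ T) {r : ℝ} (hρr : ∀ p ∈ T, ρ p ≤ r) :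
    IsClosed (⋃ p ∈ T, closedBall p (ρ p)) := by
  refine CompactlyGeneratedSpace.isClosed fun K hK => ?_
  set S := K ×ˢ (cthickening r K ∩ T)
  have hS : IsCompact S := hK.prod (hK.cthickening.inter_right hT)
  have hpairs : IsCompact {z ∈ S | dist z.1 z.2 ≤ ρ z.2} :=
    hS.of_isClosed_subset (hS.isClosed.isClosed_le (by fun_prop) (hρ.comp continuousOn_snd
      fun z hz => hz.2.2)) (sep_subset _ _)
  convert (hpairs.image continuous_fst).isClosed using 1
  ext x
  simp only [mem_inter_iff, mem_iUnion, mem_closedBall, exists_prop, mem_image, mem_ofPred_eq,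
    mem_prod, Prod.exists, exists_and_right, exists_eq_right, S]
  constructor
  · rintro ⟨⟨p, hpT, hxp⟩, hxK⟩
    exact ⟨p, ⟨hxK, mem_cthickening_of_dist_le p x r K hxK
      ((dist_comm p x ▸ hxp).trans (hρr p hpT)), hpT⟩, hxp⟩
  · rintro ⟨p, ⟨hxK, -, hpT⟩, hxp⟩
    exact ⟨⟨p, hpT, hxp⟩, hxK⟩

theorem UpperSemicontinuousOn.isClosed_inter_preimage_Ici {α β : Type*} [TopologicalSpace α]
    [LinearOrder β] {f : α → β} {s : Set α} (hs : IsClosed s) (hf : UpperSemicontinuousOn f s)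
    (y : β) : IsClosed (s ∩ f ⁻¹' Ici y) := by
  obtain ⟨v, hv, heq⟩ := upperSemicontinuousOn_iff_preimage_Ici.1 hf y
  exact heq ▸ hs.inter hv

theorem IsMaxOn.csSup_image_eq {α β : Type*} [ConditionallyCompleteLattice β] {f : α → β}
    {s : Set α} {a : α} (ha : a ∈ s) (h : IsMaxOn f s a) : sSup (f '' s) = f a :=
  IsGreatest.csSup_eq ⟨mem_image_of_mem f ha, forall_mem_image.2 h⟩

def coveringCenters (Γ : Set X) (η : X → ℝ) (x : X) : Set X := {p | p ∈ Γ ∧ dist x p ≤ η p}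

section

variable {Γ : Set X} {η g : X → ℝ} {r : ℝ}

theorem isCompact_coveringCenters (hΓ : IsClosed Γ) (hη : ContinuousOn η Γ)
    (hηr : ∀ p ∈ Γ, η p ≤ r) (x : X) : IsCompact (coveringCenters Γ η x) :=
  (isCompact_closedBall x r).of_isClosed_subset
    (hΓ.isClosed_le (continuous_const.dist continuous_id).continuousOn hη)
    fun p hp => mem_closedBall_comm.1 (hp.2.trans (hηr p hp.1))

theorem exists_isMaxOn_coveringCenters (hΓ : IsClosed Γ) (hη : ContinuousOn η Γ)
    (hηr : ∀ p ∈ Γ, η p ≤ r) (hg : UpperSemicontinuousOn g Γ) {x : X}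
    (hx : (coveringCenters Γ η x).Nonempty) :
    ∃ p ∈ coveringCenters Γ η x, IsMaxOn g (coveringCenters Γ η x) p :=
  (hg.mono fun _ hp => hp.1).exists_isMaxOn hx (isCompact_coveringCenters hΓ hη hηr x)

theorem preimage_Ici_sSup_image_coveringCenters (hΓ : IsClosed Γ) (hη : ContinuousOn η Γ)
    (hηr : ∀ p ∈ Γ, η p ≤ r) (hg : UpperSemicontinuousOn g Γ) {y : ℝ} (hy : 0 < y) :
    (fun x => sSup (g '' coveringCenters Γ η x)) ⁻¹' Ici y =
      ⋃ p ∈ Γ ∩ g ⁻¹' Ici y, closedBall p (η p) := by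
  ext x
  simp only [mem_preimage, mem_Ici, mem_iUnion, mem_inter_iff, mem_closedBall, exists_prop]
  constructor
  · intro hxy
    have hne : (coveringCenters Γ η x).Nonempty := by
      by_contra hempty
      rw [not_nonempty_iff_eq_empty.1 hempty, image_empty, Real.sSup_empty] at hxy
      exact hy.not_ge hxy
    obtain ⟨p, hp, hmax⟩ := exists_isMaxOn_coveringCenters hΓ hη hηr hg hne
    exact ⟨p, ⟨hp.1, hmax.csSup_image_eq hp ▸ hxy⟩, hp.2⟩
  · rintro ⟨p, ⟨hpΓ, hyp⟩, hxp⟩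
    have hp : p ∈ coveringCenters Γ η x := ⟨hpΓ, hxp⟩
    obtain ⟨q, hq, hmax⟩ := exists_isMaxOn_coveringCenters hΓ hη hηr hg ⟨p, hp⟩
    exact hmax.csSup_image_eq hq ▸ hyp.trans (hmax hp)

theorem upperSemicontinuous_sSup_image_coveringCenters (hΓ : IsClosed Γ)
    (hη : ContinuousOn η Γ) (hηr : ∀ p ∈ Γ, η p ≤ r) (hg : UpperSemicontinuousOn g Γ)
    (hg0 : ∀ p ∈ Γ, 0 ≤ g p) : UpperSemicontinuous fun x => sSup (g '' coveringCenters Γ η x) := by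
  refine upperSemicontinuous_iff_isClosed_preimage.2 fun y => ?_
  rcases le_or_gt y 0 with hy | hy
  · convert isClosed_univ
    exact eq_univ_of_forall fun x =>
      hy.trans (Real.sSup_nonneg (forall_mem_image.2 fun p hp => hg0 p hp.1))
  · rw [preimage_Ici_sSup_image_coveringCenters hΓ hη hηr hg hy]
    exact isClosed_biUnion_closedBall (hg.isClosed_inter_preimage_Ici hΓ y)
      (hη.mono inter_subset_left) fun p hp => hηr p hp.1

end

theorem stmt15_general (d : ℕ) (Γ : Set (EuclideanSpace ℝ (Fin d))) (hΓ : IsClosed Γ)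
    (rbar : ℝ)
    (η : EuclideanSpace ℝ (Fin d) → ℝ)
    (hηc : ContinuousOn η Γ)
    (hηle : ∀ p ∈ Γ, η p ≤ rbar)
    (g : EuclideanSpace ℝ (Fin d) → ℝ)
    (hg0 : ∀ p ∈ Γ, 0 ≤ g p)
    (hgu : UpperSemicontinuousOn g Γ)
    (G : EuclideanSpace ℝ (Fin d) → ℝ)
    (hG : ∀ x, G x = sSup (g '' {p | p ∈ Γ ∧ dist x p ≤ η p})) :
    (∀ x : EuclideanSpace ℝ (Fin d), {p | p ∈ Γ ∧ dist x p ≤ η p}.Nonempty →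
      ∃ p, (p ∈ Γ ∧ dist x p ≤ η p) ∧ g p = G x) ∧
    UpperSemicontinuous G := by
  obtain rfl : G = fun x => sSup (g '' coveringCenters Γ η x) := funext hG
  refine ⟨fun x hx => ?_, upperSemicontinuous_sSup_image_coveringCenters hΓ hηc hηle hgu hg0⟩
  obtain ⟨p, hp, hmax⟩ := exists_isMaxOn_coveringCenters hΓ hηc hηle hgu hx
  exact ⟨p, hp, (hmax.csSup_image_eq hp).symm⟩

/-- **Upper semicontinuity of the extended supremum** (Lemma 4.9 of the paper).  Let
`Γ ⊆ ℝ^d` be closed, `η : Γ → (0, r̄]` continuous, and `g : Γ → [0,∞)` upper semicontinuous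
(on `Γ`).  Define `G(x) := sup {g(p) : p ∈ Γ, |x−p| ≤ η(p)}` with `sup ∅ = 0`.  Then the
supremum is attained whenever the indexing set is nonempty, and `G` is upper semicontinuous
on `ℝ^d`. -/
theorem stmt15 (d : ℕ) (Γ : Set (EuclideanSpace ℝ (Fin d))) (hΓ : IsClosed Γ)
    (rbar : ℝ) (hrbar : 0 < rbar)
    (η : EuclideanSpace ℝ (Fin d) → ℝ)
    (hηc : ContinuousOn η Γ)
    (hηpos : ∀ p ∈ Γ, 0 < η p) (hηle : ∀ p ∈ Γ, η p ≤ rbar)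
    (g : EuclideanSpace ℝ (Fin d) → ℝ)
    (hg0 : ∀ p ∈ Γ, 0 ≤ g p)
    (hgu : UpperSemicontinuousOn g Γ)
    (G : EuclideanSpace ℝ (Fin d) → ℝ)
    (hG : ∀ x, G x = sSup (g '' {p | p ∈ Γ ∧ dist x p ≤ η p})) :
    (∀ x : EuclideanSpace ℝ (Fin d), {p | p ∈ Γ ∧ dist x p ≤ η p}.Nonempty →
      ∃ p, (p ∈ Γ ∧ dist x p ≤ η p) ∧ g p = G x) ∧
    UpperSemicontinuous G :=
  stmt15_general d Γ hΓ rbar η hηc hηle g hg0 hgu G hG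
end

section
/- Let d ≥ 1, let Y ⊆ ℝ^d be locally finite (i.e. Y ∩ B is finite for every bounded set B ⊆ ℝ^d), let E ⊆ Y × Y be a symmetric edge relation with (y₁,y₂) ∈ E implying y₁ ≠ y₂, and let D ⊆ Y. Assume 0 ∈ Y and that there exists a finite path z_0 = 0, z_1, …, z_N in the graph, with (z_j, z_{j+1}) ∈ E for all j = 0,…,N−1 and z_N ∈ D. Then there exist R_0 > 0 and C > 0 such that for every R ≥ R_0 and every function u : Y → ℝ vanishing on D: u(0)² ≤ C · Σ (u(y₁) − u(y₂))² / |y₁ − y₂|², where the (finite) sum runs over all pairs (y₁, y₂) ∈ E with y₁, y₂ ∈ B(0,R). -/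
/-- **Discrete Poincaré inequality** (Lemma 3.15 of the paper).  Let `Y ⊆ ℝ^d` be locally
finite, `E ⊆ Y × Y` a symmetric loop-free edge relation, `D ⊆ Y`, `0 ∈ Y`, and assume there
is a finite path in the graph from `0` to a point of `D`.  Then there are `R₀ > 0` and
`C > 0` such that for every `R ≥ R₀` and every `u : Y → ℝ` vanishing on `D`:
`u(0)² ≤ C ∑_{(y₁,y₂) ∈ E, y₁,y₂ ∈ B(0,R)} (u(y₁) − u(y₂))² / |y₁ − y₂|²`. -/
theorem stmt17 (d : ℕ) (hd : 1 ≤ d) (Y : Set (EuclideanSpace ℝ (Fin d)))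
    (hloc : ∀ B : Set (EuclideanSpace ℝ (Fin d)), Bornology.IsBounded B → (Y ∩ B).Finite)
    (E : Set (EuclideanSpace ℝ (Fin d) × EuclideanSpace ℝ (Fin d)))
    (hEY : ∀ e ∈ E, e.1 ∈ Y ∧ e.2 ∈ Y)
    (hsymm : ∀ y₁ y₂, (y₁, y₂) ∈ E → (y₂, y₁) ∈ E)
    (hne : ∀ y₁ y₂, (y₁, y₂) ∈ E → y₁ ≠ y₂)
    (D : Set (EuclideanSpace ℝ (Fin d))) (hD : D ⊆ Y)
    (h0 : (0 : EuclideanSpace ℝ (Fin d)) ∈ Y)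
    (hpath : ∃ N : ℕ, ∃ z : ℕ → EuclideanSpace ℝ (Fin d),
      z 0 = 0 ∧ z N ∈ D ∧ ∀ j < N, (z j, z (j+1)) ∈ E) :
    ∃ R₀ : ℝ, 0 < R₀ ∧ ∃ C : ℝ, 0 < C ∧
      ∀ R : ℝ, R₀ ≤ R → ∀ u : EuclideanSpace ℝ (Fin d) → ℝ, (∀ y ∈ D, u y = 0) →
        (u 0) ^ 2 ≤ C * ∑ᶠ e ∈ {e ∈ E |
            e.1 ∈ Metric.ball (0 : EuclideanSpace ℝ (Fin d)) R ∧
            e.2 ∈ Metric.ball (0 : EuclideanSpace ℝ (Fin d)) R},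
          (u e.1 - u e.2) ^ 2 / dist e.1 e.2 ^ 2 := by
  obtain ⟨N, z, hz0, hzD, hzE⟩ := hpath
  have hMne : (Finset.range (N+1)).Nonempty := ⟨0, by simp⟩
  set M : ℝ := (Finset.range (N+1)).sup' hMne (fun j => ‖z j‖) with hM
  have hMle : ∀ j ≤ N, ‖z j‖ ≤ M := fun j hj =>
    Finset.le_sup' (fun j => ‖z j‖) (Finset.mem_range.2 (Nat.lt_succ_of_le hj))
  have hM0 : 0 ≤ M := le_trans (norm_nonneg (z 0)) (hMle 0 (Nat.zero_le N))
  refine ⟨M + 1, by linarith, (N : ℝ) * ∑ j ∈ Finset.range N, dist (z j) (z (j+1)) ^ 2 + 1,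
    ?_, ?_⟩
  · have : (0:ℝ) ≤ (N : ℝ) * ∑ j ∈ Finset.range N, dist (z j) (z (j+1)) ^ 2 :=
      mul_nonneg (Nat.cast_nonneg N) (Finset.sum_nonneg fun j _ => sq_nonneg _)
    linarith
  intro R hR u hu
  set S : Set (EuclideanSpace ℝ (Fin d) × EuclideanSpace ℝ (Fin d)) :=
    {e ∈ E | e.1 ∈ Metric.ball (0 : EuclideanSpace ℝ (Fin d)) R ∧
      e.2 ∈ Metric.ball (0 : EuclideanSpace ℝ (Fin d)) R} with hSdef
  have hSfin : S.Finite := by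
    have hB : (Y ∩ Metric.ball (0 : EuclideanSpace ℝ (Fin d)) R).Finite :=
      hloc _ Metric.isBounded_ball
    refine Set.Finite.subset (hB.prod hB) ?_
    rintro ⟨a, b⟩ ⟨heE, ha, hb⟩
    exact ⟨⟨(hEY _ heE).1, ha⟩, ⟨(hEY _ heE).2, hb⟩⟩
  set f : EuclideanSpace ℝ (Fin d) × EuclideanSpace ℝ (Fin d) → ℝ :=
    fun e => (u e.1 - u e.2) ^ 2 / dist e.1 e.2 ^ 2 with hf
  have hfnn : ∀ e, 0 ≤ f e := fun e => div_nonneg (sq_nonneg _) (sq_nonneg _)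
  have hsum : (∑ᶠ e ∈ S, f e) = ∑ e ∈ hSfin.toFinset, f e :=
    finsum_mem_eq_finite_toFinset_sum f hSfin
  set T : ℝ := ∑ e ∈ hSfin.toFinset, f e with hT
  have hT0 : 0 ≤ T := Finset.sum_nonneg fun e _ => hfnn e
  -- each path edge lies in S
  have hmem : ∀ j < N, (z j, z (j+1)) ∈ hSfin.toFinset := by
    intro j hj
    rw [Set.Finite.mem_toFinset]
    have h1 : z j ∈ Metric.ball (0 : EuclideanSpace ℝ (Fin d)) R := by
      rw [Metric.mem_ball, dist_zero_right]
      exact lt_of_le_of_lt (hMle j hj.le) (by linarith)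
    have h2 : z (j+1) ∈ Metric.ball (0 : EuclideanSpace ℝ (Fin d)) R := by
      rw [Metric.mem_ball, dist_zero_right]
      exact lt_of_le_of_lt (hMle (j+1) hj) (by linarith)
    exact ⟨hzE j hj, h1, h2⟩
  have hfle : ∀ j < N, f (z j, z (j+1)) ≤ T :=
    fun j hj => Finset.single_le_sum (fun e _ => hfnn e) (hmem j hj)
  -- telescoping
  have htel : u 0 = ∑ j ∈ Finset.range N, (u (z j) - u (z (j+1))) := by
    rw [Finset.sum_range_sub' (fun j => u (z j)) N, hz0, hu _ hzD, sub_zero]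
  have hCS : (u 0) ^ 2 ≤ (N : ℝ) * ∑ j ∈ Finset.range N, (u (z j) - u (z (j+1))) ^ 2 := by
    rw [htel]
    simpa using (sq_sum_le_card_mul_sum_sq
      (s := Finset.range N) (f := fun j => u (z j) - u (z (j+1))))
  have hterm : ∀ j < N, (u (z j) - u (z (j+1))) ^ 2
      = dist (z j) (z (j+1)) ^ 2 * f (z j, z (j+1)) := by
    intro j hj
    have hdne : dist (z j) (z (j+1)) ≠ 0 :=
      dist_ne_zero.2 (hne _ _ (hzE j hj))
    rw [hf]
    field_simp
  have hsum2 : ∑ j ∈ Finset.range N, (u (z j) - u (z (j+1))) ^ 2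
      ≤ (∑ j ∈ Finset.range N, dist (z j) (z (j+1)) ^ 2) * T := by
    rw [Finset.sum_mul]
    refine Finset.sum_le_sum fun j hj => ?_
    rw [hterm j (Finset.mem_range.1 hj)]
    exact mul_le_mul_of_nonneg_left (hfle j (Finset.mem_range.1 hj)) (sq_nonneg _)
  calc (u 0) ^ 2 ≤ (N : ℝ) * ∑ j ∈ Finset.range N, (u (z j) - u (z (j+1))) ^ 2 := hCS
    _ ≤ (N : ℝ) * ((∑ j ∈ Finset.range N, dist (z j) (z (j+1)) ^ 2) * T) :=
        mul_le_mul_of_nonneg_left hsum2 (Nat.cast_nonneg N)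
    _ ≤ ((N : ℝ) * ∑ j ∈ Finset.range N, dist (z j) (z (j+1)) ^ 2 + 1) * T := by
        nlinarith [hT0]
    _ = _ := by rw [hsum]
end
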